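/- arXiv:1609.03738 — 5 statements merged into one kernel-verified Lean document; each statement's English description precedes it below -/
import Mathlib

section
/- Let f : {1,2,3,...} → ℝ be a nonnegative arithmetic function and let c ≥ 0 be a real number such that ∑_{m ≤ M} f(m) = c·M + O(M^{3/5}) as M → ∞. Then for every fixed integer k ≥ 1, as M → ∞, ∑_{m ≤ M} f^{*k}(m) = c^k · M · (log M)^{k-1}/(k-1)! + O(M (log M)^{k-2}). -/
/-!
Write `S_g(x) = ∑_{m ≤ x} g(m)` and suppose `S_f(y) = c y + O(y^θ)` with `0 ≤ θ < 1`
(here `θ = 3/5`). For nonnegative `g`, the hyperbola identity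
`S_{g * f}(x) = ∑_{a ≤ x} g(a) S_f(x/a)` gives
`S_{g * f}(x) = c x ∑_{a ≤ x} g(a)/a + O(x^θ ∑_{a ≤ x} g(a) a^{-θ})`.
By Abel summation, a bound `S_g(t) ≪ t (log t)^{k-1}` makes the error `O(x (log x)^{k-1})`, and an
asymptotic `S_g(t) = a t (log t)^{k-1}/(k-1)! + O(t (log t)^{k-2})` turns into
`∑_{a ≤ x} g(a)/a = a (log x)^k/k! + O((log x)^{k-1})`. Apply this inductively to `g = f^{*k}`.
-/

open Filter Finset MeasureTheory Real
open scoped Nat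

noncomputable def summatory (g : ArithmeticFunction ℝ) (x : ℝ) : ℝ :=
  ∑ m ∈ Icc 1 ⌊x⌋₊, g m

lemma summatory_nonneg {g : ArithmeticFunction ℝ} (hg : ∀ n, 0 ≤ g n) (x : ℝ) :
    0 ≤ summatory g x :=
  sum_nonneg fun n _ => hg n

lemma summatory_mono {g : ArithmeticFunction ℝ} (hg : ∀ n, 0 ≤ g n) : Monotone (summatory g) :=
  fun _ _ hst => sum_le_sum_of_subset_of_nonneg (Icc_subset_Icc le_rfl (Nat.floor_le_floor hst))
    fun n _ _ => hg n

lemma summatory_mul (f g : ArithmeticFunction ℝ) (x : ℝ) :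
    summatory (f * g) x = ∑ a ∈ Icc 1 ⌊x⌋₊, f a * summatory g (x / a) := by
  simp only [summatory, Nat.floor_div_natCast]
  exact ArithmeticFunction.sum_Ioc_mul_eq_sum_sum f g ⌊x⌋₊

lemma ArithmeticFunction.pow_apply_nonneg {R : Type*} [CommSemiring R] [PartialOrder R]
    [IsOrderedRing R] {f : ArithmeticFunction R} (hf : ∀ n, 0 ≤ f n) (k n : ℕ) :
    0 ≤ (f ^ k) n := by
  induction k generalizing n with
  | zero => rw [pow_zero, one_apply]; split_ifs <;> simp
  | succ k ih => rw [pow_succ, mul_apply]; exact sum_nonneg fun p _ => mul_nonneg (ih _) (hf _)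

lemma integrableOn_summatory_mul (g : ArithmeticFunction ℝ) {w : ℝ → ℝ} {x : ℝ}
    (hw : IntegrableOn w (Set.Icc 1 x)) :
    IntegrableOn (fun t => summatory g t * w t) (Set.Ioc 1 x) :=
  ((integrableOn_mul_sum_Icc (fun n => g n) zero_le_one hw).mono_set
    Set.Ioc_subset_Icc_self).congr_fun (fun _ _ => mul_comm _ _) measurableSet_Ioc

lemma sum_mul_eq_summatory_mul_sub_integral (g : ArithmeticFunction ℝ) {w w' : ℝ → ℝ} {x : ℝ}
    (hw : ∀ t ∈ Set.Icc 1 x, HasDerivAt w (w' t) t) (hw' : ContinuousOn w' (Set.Icc 1 x)) :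
    ∑ a ∈ Icc 1 ⌊x⌋₊, g a * w a
      = summatory g x * w x - ∫ t in Set.Ioc 1 x, summatory g t * w' t := by
  have hderiv : Set.EqOn (deriv w) w' (Set.Icc 1 x) := fun t ht => (hw t ht).deriv
  have hzero : ∀ {u : ℕ → ℝ}, u 0 = 0 → ∀ n, ∑ k ∈ Icc 0 n, u k = ∑ k ∈ Icc 1 n, u k :=
    fun hu n => by rw [Icc_eq_cons_Ioc n.zero_le, sum_cons, hu, zero_add]; rfl
  have abel := sum_mul_eq_sub_integral_mul₀ (fun n => g n) g.map_zero x
    (fun t ht => (hw t ht).differentiableAt)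
    (hw'.integrableOn_Icc.congr_fun hderiv.symm measurableSet_Icc)
  rw [setIntegral_congr_fun measurableSet_Ioc
    fun t ht => by rw [hderiv (Set.Ioc_subset_Icc_self ht)]] at abel
  simp only [hzero g.map_zero, hzero (u := fun k => w k * g k) (by simp)] at abel
  simp only [summatory, mul_comm (g _)]
  rw [abel]
  simp only [mul_comm]

lemma integral_rpow_Ioc_one {r x : ℝ} (hr : r ≠ -1) (hx : 1 ≤ x) :
    ∫ t in Set.Ioc 1 x, t ^ r = (x ^ (r + 1) - 1) / (r + 1) := by
  rw [← intervalIntegral.integral_of_le hx, integral_rpow (Or.inr ⟨hr, fun h => by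
    linarith [(Set.uIcc_of_le hx ▸ h).1]⟩), one_rpow]

lemma integrableOn_Ioc_one_of_continuousOn {h : ℝ → ℝ} {x : ℝ}
    (hh : ContinuousOn h (Set.Icc 1 x)) :
    IntegrableOn h (Set.Ioc 1 x) :=
  hh.integrableOn_Icc.mono_set Set.Ioc_subset_Icc_self

lemma sum_mul_rpow_neg_le {g : ArithmeticFunction ℝ} {σ K x : ℝ} (hσ0 : 0 ≤ σ) (hσ1 : σ < 1)
    (hK : 0 ≤ K) (hx : 1 ≤ x) (hg : ∀ t ∈ Set.Icc 1 x, summatory g t ≤ K * t) :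
    ∑ a ∈ Icc 1 ⌊x⌋₊, g a * (a : ℝ) ^ (-σ) ≤ K * x ^ (1 - σ) / (1 - σ) := by
  have hpos : ∀ t ∈ Set.Icc (1 : ℝ) x, 0 < t := fun t ht => zero_lt_one.trans_le ht.1
  have hmul : ∀ t ∈ Set.Icc (1 : ℝ) x, t * t ^ (-σ - 1) = t ^ (-σ) := fun t ht => by
    rw [mul_comm, ← rpow_add_one (hpos t ht).ne', sub_add_cancel]
  have hcont : ContinuousOn (fun t : ℝ => t ^ (-σ - 1)) (Set.Icc 1 x) :=
    continuousOn_id.rpow_const fun t ht => Or.inl (hpos t ht).ne'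
  rw [sum_mul_eq_summatory_mul_sub_integral g (w' := fun t => -σ * t ^ (-σ - 1))
    (fun t ht => hasDerivAt_rpow_const (Or.inl (hpos t ht).ne')) (continuousOn_const.mul hcont)]
  have hfirst : summatory g x * x ^ (-σ) ≤ K * x ^ (1 - σ) := by
    calc summatory g x * x ^ (-σ) ≤ K * x * x ^ (-σ) :=
          mul_le_mul_of_nonneg_right (hg x ⟨hx, le_rfl⟩) (rpow_nonneg (by linarith) _)
      _ = K * x ^ (1 - σ) := by rw [mul_assoc, ← rpow_one_add' (by linarith) (by linarith),
            ← sub_eq_add_neg]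
  have hint : -σ * K * ((x ^ (1 - σ) - 1) / (1 - σ))
      ≤ ∫ t in Set.Ioc 1 x, summatory g t * (-σ * t ^ (-σ - 1)) := by
    rw [← neg_add_eq_sub σ 1, ← integral_rpow_Ioc_one (by linarith) hx, ← integral_const_mul]
    refine setIntegral_mono_on
      ((integrableOn_Ioc_one_of_continuousOn
        (continuousOn_id.rpow_const fun t ht => Or.inl (hpos t ht).ne')).const_mul _)
      (integrableOn_summatory_mul g (continuousOn_const.mul hcont).integrableOn_Icc)
      measurableSet_Ioc fun t ht => ?_
    have ht := Set.Ioc_subset_Icc_self ht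
    rw [← hmul t ht]
    have := mul_le_mul_of_nonneg_right (hg t ht) (rpow_nonneg (hpos t ht).le (-σ - 1))
    nlinarith
  have h1σ : 0 < 1 - σ := by linarith
  calc summatory g x * x ^ (-σ) - ∫ t in Set.Ioc 1 x, summatory g t * (-σ * t ^ (-σ - 1))
      ≤ K * x ^ (1 - σ) + σ * K * ((x ^ (1 - σ) - 1) / (1 - σ)) := by linarith
    _ ≤ K * x ^ (1 - σ) / (1 - σ) := by
      rw [← sub_nonneg]
      field_simp
      nlinarith [mul_nonneg hσ0 hK]

-- Abel summation against `1/t`: `∑_{a ≤ x} g(a)/a = S_g(x)/x + ∫_1^x S_g(t)/t² dt`.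
lemma abs_sum_div_sub_integral_le (g : ArithmeticFunction ℝ) {M E : ℝ → ℝ} {x : ℝ} (hx : 1 ≤ x)
    (hM : IntegrableOn (fun t => M t / t ^ 2) (Set.Ioc 1 x))
    (hE : IntegrableOn (fun t => E t / t ^ 2) (Set.Ioc 1 x))
    (h : ∀ t ∈ Set.Icc 1 x, |summatory g t - M t| ≤ E t) :
    |∑ a ∈ Icc 1 ⌊x⌋₊, g a / a - ∫ t in Set.Ioc 1 x, M t / t ^ 2|
      ≤ (|M x| + E x) / x + ∫ t in Set.Ioc 1 x, E t / t ^ 2 := by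
  have hpos : ∀ t ∈ Set.Icc (1 : ℝ) x, 0 < t := fun t ht => zero_lt_one.trans_le ht.1
  have hcont : ContinuousOn (fun t : ℝ => -(t ^ 2)⁻¹) (Set.Icc 1 x) :=
    (continuousOn_pow 2).inv₀ (fun t ht => pow_ne_zero 2 (hpos t ht).ne') |>.neg
  have abel := sum_mul_eq_summatory_mul_sub_integral g (w := fun t => t⁻¹)
    (fun t ht => hasDerivAt_inv (hpos t ht).ne') hcont
  simp only [mul_neg, integral_neg, sub_neg_eq_add, ← div_eq_mul_inv] at abel
  have hS : IntegrableOn (fun t => summatory g t / t ^ 2) (Set.Ioc 1 x) := by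
    simpa only [div_eq_mul_inv] using integrableOn_summatory_mul g (w := fun t => (t ^ 2)⁻¹)
      ((continuousOn_pow 2).inv₀ (fun t ht => pow_ne_zero 2 (hpos t ht).ne')).integrableOn_Icc
  rw [abel, add_sub_assoc, ← integral_sub hS hM]
  have hx0 := hpos x ⟨hx, le_rfl⟩
  refine (abs_add_le _ _).trans (add_le_add ?_ ?_)
  · rw [abs_div, abs_of_pos hx0]
    gcongr
    linarith [abs_sub_abs_le_abs_sub (summatory g x) (M x), h x ⟨hx, le_rfl⟩]
  · rw [← Real.norm_eq_abs]
    refine norm_integral_le_of_norm_le hE ((ae_restrict_iff' measurableSet_Ioc).mpr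
      (Eventually.of_forall fun t ht => ?_))
    have ht := Set.Ioc_subset_Icc_self ht
    rw [Real.norm_eq_abs, ← sub_div, abs_div, abs_of_pos (pow_pos (hpos t ht) 2)]
    gcongr
    exact h t ht

lemma abs_sum_div_sub_mul_log_le {f : ArithmeticFunction ℝ} {c A θ x : ℝ} (hA : 0 ≤ A)
    (hθ : θ < 1) (hx : 1 ≤ x) (hf : ∀ t ∈ Set.Icc 1 x, |summatory f t - c * t| ≤ A * t ^ θ) :
    |∑ m ∈ Icc 1 ⌊x⌋₊, f m / m - c * log x| ≤ |c| + A + A / (1 - θ) := by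
  have hpos : ∀ t ∈ Set.Icc (1 : ℝ) x, 0 < t := fun t ht => zero_lt_one.trans_le ht.1
  have hne : ∀ t ∈ Set.Icc (1 : ℝ) x, t ≠ 0 := fun t ht => (hpos t ht).ne'
  have hx0 := hpos x ⟨hx, le_rfl⟩
  have key := abs_sum_div_sub_integral_le f hx (M := fun t => c * t) (E := fun t => A * t ^ θ)
    (integrableOn_Ioc_one_of_continuousOn (by fun_prop (disch := intro t ht; simp [hne t ht])))
    (integrableOn_Ioc_one_of_continuousOn (by fun_prop (disch := intro t ht; simp [hne t ht]))) hf
  rw [setIntegral_congr_fun measurableSet_Ioc (g := fun t => c * t⁻¹) fun t ht => by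
      field_simp [hne t (Set.Ioc_subset_Icc_self ht)],
    integral_const_mul, ← intervalIntegral.integral_of_le hx, integral_inv_of_pos one_pos hx0,
    div_one, setIntegral_congr_fun measurableSet_Ioc (g := fun t => A * t ^ (θ - 2)) fun t ht => by
      dsimp only
      rw [mul_div_assoc, ← rpow_sub_natCast (hne t (Set.Ioc_subset_Icc_self ht))]
      norm_num,
    integral_const_mul, integral_rpow_Ioc_one (by linarith) hx] at key
  refine key.trans ?_
  have hy : x ^ θ = x ^ (θ - 1) * x := by rw [← rpow_add_one hx0.ne', sub_add_cancel]
  have hy0 : 0 < x ^ (θ - 1) := rpow_pos_of_pos hx0 _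
  have hy1 : x ^ (θ - 1) ≤ 1 := rpow_le_one_of_one_le_of_nonpos hx (by linarith)
  have hsplit : (|c * x| + A * x ^ θ) / x + A * ((x ^ (θ - 2 + 1) - 1) / (θ - 2 + 1))
      = |c| + A * x ^ (θ - 1) + A * ((1 - x ^ (θ - 1)) / (1 - θ)) := by
    have : θ - 1 ≠ 0 := by linarith
    have : 1 - θ ≠ 0 := by linarith
    rw [abs_mul, abs_of_pos hx0, hy, show θ - 2 + 1 = θ - 1 by ring]
    field_simp
    ring
  have h1 : A * x ^ (θ - 1) ≤ A := mul_le_of_le_one_right hA hy1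
  have h2 : A * ((1 - x ^ (θ - 1)) / (1 - θ)) ≤ A / (1 - θ) := by
    rw [mul_div_assoc']
    exact div_le_div_of_nonneg_right (by nlinarith) (by linarith)
  linarith

lemma continuousOn_add_log_pow_div (u : ℝ) (n : ℕ) (x : ℝ) :
    ContinuousOn (fun t => (u + log t) ^ n / t) (Set.Icc 1 x) := by
  have hne : ∀ t ∈ Set.Icc (1 : ℝ) x, t ≠ 0 := fun t ht => (zero_lt_one.trans_le ht.1).ne'
  exact ((continuousOn_const.add (continuousOn_log.mono fun t ht => hne t ht)).pow n).div
    continuousOn_id hne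

lemma integral_add_log_pow_div (u : ℝ) (n : ℕ) {x : ℝ} (hx : 1 ≤ x) :
    ∫ t in Set.Ioc 1 x, (u + log t) ^ n / t = ((u + log x) ^ (n + 1) - u ^ (n + 1)) / (n + 1) := by
  have hderiv : ∀ t ∈ Set.uIcc 1 x,
      HasDerivAt (fun s => (u + log s) ^ (n + 1) / (n + 1)) ((u + log t) ^ n / t) t := by
    intro t ht
    rw [Set.uIcc_of_le hx] at ht
    refine ((((hasDerivAt_log (zero_lt_one.trans_le ht.1).ne').const_add u).fun_pow
      (n + 1)).div_const ((n : ℝ) + 1)).congr_deriv ?_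
    push_cast
    field_simp
  rw [← intervalIntegral.integral_of_le hx, intervalIntegral.integral_eq_sub_of_hasDerivAt hderiv
    ((intervalIntegrable_iff_integrableOn_Icc_of_le hx).mpr
      (continuousOn_add_log_pow_div u n x).integrableOn_Icc), log_one, add_zero, sub_div]

lemma integral_mul_log_pow_div_sq (a : ℝ) (n : ℕ) {x : ℝ} (hx : 1 ≤ x) :
    ∫ t in Set.Ioc 1 x, a * t * log t ^ (n + 1) / (n + 1)! / t ^ 2
      = a * log x ^ (n + 2) / (n + 2)! := by
  rw [setIntegral_congr_fun measurableSet_Ioc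
      (g := fun t => a / (n + 1)! * ((0 + log t) ^ (n + 1) / t)) fun t ht => by
        field_simp [(zero_lt_one.trans ht.1).ne']
        ring,
    integral_const_mul, integral_add_log_pow_div 0 _ hx, Nat.factorial_succ (n + 1)]
  push_cast
  field_simp
  ring

lemma abs_sum_div_sub_log_pow_le {g : ArithmeticFunction ℝ} {a C x : ℝ} {n : ℕ} (hC : 0 ≤ C)
    (hx : 1 ≤ x) (hg : ∀ t ∈ Set.Icc 1 x,
      |summatory g t - a * t * log t ^ (n + 1) / (n + 1)!| ≤ C * t * (1 + log t) ^ n) :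
    |∑ m ∈ Icc 1 ⌊x⌋₊, g m / m - a * log x ^ (n + 2) / (n + 2)!|
      ≤ (|a| / (n + 1)! + 2 * C) * (1 + log x) ^ (n + 1) := by
  have hpos : ∀ t ∈ Set.Icc (1 : ℝ) x, 0 < t := fun t ht => zero_lt_one.trans_le ht.1
  have hne : ∀ t ∈ Set.Icc (1 : ℝ) x, t ≠ 0 := fun t ht => (hpos t ht).ne'
  have key := abs_sum_div_sub_integral_le g hx
    (M := fun t => a * t * log t ^ (n + 1) / (n + 1)!) (E := fun t => C * t * (1 + log t) ^ n)
    (integrableOn_Ioc_one_of_continuousOn (by fun_prop (disch := intro t ht; simp [hne t ht])))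
    (integrableOn_Ioc_one_of_continuousOn (by fun_prop (disch := intro t ht; simp [hne t ht]))) hg
  rw [integral_mul_log_pow_div_sq a n hx, setIntegral_congr_fun measurableSet_Ioc
      (g := fun t => C * ((1 + log t) ^ n / t)) fun t ht => by
        field_simp [hne t (Set.Ioc_subset_Icc_self ht)],
    integral_const_mul, integral_add_log_pow_div 1 _ hx, one_pow] at key
  refine key.trans ?_
  have hL : 0 ≤ log x := log_nonneg hx
  have hx0 : 0 < x := hpos x ⟨hx, le_rfl⟩
  have h1 : |a| / (n + 1)! * log x ^ (n + 1) ≤ |a| / (n + 1)! * (1 + log x) ^ (n + 1) := by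
    gcongr
    linarith
  have h2 : (1 + log x) ^ n ≤ (1 + log x) ^ (n + 1) :=
    pow_le_pow_right₀ (by linarith) n.le_succ
  have h3 : ((1 + log x) ^ (n + 1) - 1) / (n + 1) ≤ (1 + log x) ^ (n + 1) := by
    rw [div_le_iff₀ (by positivity)]
    nlinarith [one_le_pow₀ (n := n + 1) (by linarith : (1 : ℝ) ≤ 1 + log x)]
  have hfirst : (|a * x * log x ^ (n + 1) / (n + 1)!| + C * x * (1 + log x) ^ n) / x
      = |a| / (n + 1)! * log x ^ (n + 1) + C * (1 + log x) ^ n := by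
    rw [abs_div, abs_mul, abs_mul, abs_of_pos hx0, abs_of_nonneg (pow_nonneg hL _), Nat.abs_cast]
    field_simp
  rw [hfirst]
  nlinarith [mul_le_mul_of_nonneg_left h2 hC, mul_le_mul_of_nonneg_left h3 hC]

lemma abs_summatory_mul_sub_le {f g : ArithmeticFunction ℝ} {c A θ K x : ℝ}
    (hg : ∀ n, 0 ≤ g n) (hA : 0 ≤ A) (hθ0 : 0 ≤ θ) (hθ1 : θ < 1) (hK : 0 ≤ K) (hx : 1 ≤ x)
    (hf : ∀ t ∈ Set.Icc 1 x, |summatory f t - c * t| ≤ A * t ^ θ)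
    (hgK : ∀ t ∈ Set.Icc 1 x, summatory g t ≤ K * t) :
    |summatory (g * f) x - c * x * ∑ m ∈ Icc 1 ⌊x⌋₊, g m / m| ≤ A * K / (1 - θ) * x := by
  have hx0 : 0 < x := zero_lt_one.trans_le hx
  have hterm : ∀ a ∈ Icc 1 ⌊x⌋₊, |g a * summatory f (x / a) - c * x * (g a / a)|
      ≤ A * x ^ θ * (g a * (a : ℝ) ^ (-θ)) := by
    intro a ha
    have ha1 : (1 : ℝ) ≤ a := by exact_mod_cast (mem_Icc.mp ha).1
    have hax : (a : ℝ) ≤ x := (Nat.cast_le.mpr (mem_Icc.mp ha).2).trans (Nat.floor_le hx0.le)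
    have hmem : x / a ∈ Set.Icc 1 x :=
      ⟨(one_le_div (by linarith)).mpr hax, div_le_self hx0.le ha1⟩
    calc |g a * summatory f (x / a) - c * x * (g a / a)|
        = g a * |summatory f (x / a) - c * (x / a)| := by
          rw [← abs_of_nonneg (hg a), ← abs_mul, abs_of_nonneg (hg a)]
          ring_nf
      _ ≤ g a * (A * (x / a) ^ θ) := by gcongr; exacts [hg a, hf _ hmem]
      _ = A * x ^ θ * (g a * (a : ℝ) ^ (-θ)) := by
          rw [div_rpow hx0.le (by linarith), rpow_neg (by linarith)]
          ring
  rw [summatory_mul, mul_sum, ← sum_sub_distrib]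
  calc |∑ a ∈ Icc 1 ⌊x⌋₊, (g a * summatory f (x / a) - c * x * (g a / a))|
      ≤ ∑ a ∈ Icc 1 ⌊x⌋₊, A * x ^ θ * (g a * (a : ℝ) ^ (-θ)) :=
        (abs_sum_le_sum_abs _ _).trans (sum_le_sum hterm)
    _ ≤ A * x ^ θ * (K * x ^ (1 - θ) / (1 - θ)) := by
        rw [← mul_sum]
        gcongr
        exact sum_mul_rpow_neg_le hθ0 hθ1 hK hx hgK
    _ = A * K / (1 - θ) * x := by
        rw [mul_div_assoc', mul_mul_mul_comm, ← rpow_add hx0, add_sub_cancel, rpow_one]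
        ring

lemma abs_summatory_mul_sub_le_of_bounds {f g : ArithmeticFunction ℝ} {c a A θ B C x : ℝ} {n : ℕ}
    (hg : ∀ m, 0 ≤ g m) (hA : 0 ≤ A) (hθ0 : 0 ≤ θ) (hθ1 : θ < 1) (hB : 0 ≤ B) (hx : 1 ≤ x)
    (hf : ∀ t ∈ Set.Icc 1 x, |summatory f t - c * t| ≤ A * t ^ θ)
    (hgS : ∀ t ∈ Set.Icc 1 x, summatory g t ≤ B * t * (1 + log t) ^ n)
    (hgD : |∑ m ∈ Icc 1 ⌊x⌋₊, g m / m - a * log x ^ (n + 1) / (n + 1)!| ≤ C * (1 + log x) ^ n) :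
    |summatory (g * f) x - c * a * x * log x ^ (n + 1) / (n + 1)!|
      ≤ (|c| * C + A * B / (1 - θ)) * x * (1 + log x) ^ n := by
  have hx0 : 0 < x := zero_lt_one.trans_le hx
  have hgK : ∀ t ∈ Set.Icc 1 x, summatory g t ≤ B * (1 + log x) ^ n * t := fun t ht => by
    have hlog : log t ≤ log x := log_le_log (zero_lt_one.trans_le ht.1) ht.2
    calc summatory g t ≤ B * t * (1 + log t) ^ n := hgS t ht
      _ ≤ B * t * (1 + log x) ^ n :=
          mul_le_mul_of_nonneg_left (pow_le_pow_left₀ (by linarith [log_nonneg ht.1])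
            (by linarith) n) (mul_nonneg hB (by linarith [ht.1]))
      _ = B * (1 + log x) ^ n * t := by ring
  have hconv := abs_summatory_mul_sub_le hg hA hθ0 hθ1
    (mul_nonneg hB (pow_nonneg (by linarith [log_nonneg hx]) n)) hx hf hgK
  have hmain : |c * x * ∑ m ∈ Icc 1 ⌊x⌋₊, g m / m - c * a * x * log x ^ (n + 1) / (n + 1)!|
      ≤ |c| * C * x * (1 + log x) ^ n := by
    calc _ = |c| * x * |∑ m ∈ Icc 1 ⌊x⌋₊, g m / m - a * log x ^ (n + 1) / (n + 1)!| := by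
          rw [← abs_of_pos hx0, ← abs_mul, ← abs_mul, abs_of_pos hx0]
          ring_nf
      _ ≤ |c| * x * (C * (1 + log x) ^ n) := by gcongr
      _ = |c| * C * x * (1 + log x) ^ n := by ring
  calc _ ≤ |summatory (g * f) x - c * x * ∑ m ∈ Icc 1 ⌊x⌋₊, g m / m|
        + |c * x * ∑ m ∈ Icc 1 ⌊x⌋₊, g m / m - c * a * x * log x ^ (n + 1) / (n + 1)!| :=
        abs_sub_le _ _ _
    _ ≤ A * (B * (1 + log x) ^ n) / (1 - θ) * x + |c| * C * x * (1 + log x) ^ n :=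
        add_le_add hconv hmain
    _ = (|c| * C + A * B / (1 - θ)) * x * (1 + log x) ^ n := by ring

lemma summatory_le_of_abs_sub_le {g : ArithmeticFunction ℝ} {a C t : ℝ} {n : ℕ} (hC : 0 ≤ C)
    (ht : 1 ≤ t)
    (h : |summatory g t - a * t * log t ^ (n + 1) / (n + 1)!| ≤ C * t * (1 + log t) ^ n) :
    summatory g t ≤ (|a| / (n + 1)! + C) * t * (1 + log t) ^ (n + 1) := by
  have hL : 0 ≤ log t := log_nonneg ht
  have h1 : a * t * log t ^ (n + 1) / (n + 1)! ≤ |a| / (n + 1)! * t * (1 + log t) ^ (n + 1) := by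
    have : a * (t * log t ^ (n + 1)) ≤ |a| * (t * (1 + log t) ^ (n + 1)) :=
      mul_le_mul (le_abs_self a) (by gcongr; linarith) (mul_nonneg (by linarith) (pow_nonneg hL _))
        (abs_nonneg a)
    rw [div_mul_eq_mul_div, div_mul_eq_mul_div, mul_assoc, mul_assoc]
    gcongr
  have h2 : C * t * (1 + log t) ^ n ≤ C * t * (1 + log t) ^ (n + 1) := by
    gcongr
    · linarith
    · exact n.le_succ
  linarith [le_abs_self (summatory g t - a * t * log t ^ (n + 1) / (n + 1)!)]

lemma exists_abs_summatory_sub_le {f : ArithmeticFunction ℝ} (hf : ∀ n, 0 ≤ f n) {c θ : ℝ}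
    (hθ : 0 ≤ θ) (h : (fun x => summatory f x - c * x) =O[atTop] fun x => x ^ θ) :
    ∃ A, 0 ≤ A ∧ ∀ t, 1 ≤ t → |summatory f t - c * t| ≤ A * t ^ θ := by
  obtain ⟨C, hC⟩ := h.bound
  obtain ⟨x₀, hx₀⟩ := eventually_atTop.mp (hC.and (eventually_ge_atTop 1))
  set B := summatory f x₀ + |c| * x₀
  have hB : 0 ≤ B := add_nonneg (summatory_nonneg hf x₀) (mul_nonneg (abs_nonneg c)
    (by linarith [(hx₀ x₀ le_rfl).2]))
  refine ⟨|C| + B, by positivity, fun t ht => ?_⟩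
  have ht0 : 0 < t := zero_lt_one.trans_le ht
  have hpow : 1 ≤ t ^ θ := one_le_rpow ht hθ
  rcases le_total x₀ t with hxt | htx
  · have := (hx₀ t hxt).1
    rw [norm_eq_abs, norm_eq_abs, abs_of_pos (rpow_pos_of_pos ht0 θ)] at this
    nlinarith [le_abs_self C]
  · have hS := summatory_mono hf htx
    have : |summatory f t - c * t| ≤ B := by
      rw [abs_le]
      constructor <;> nlinarith [summatory_nonneg hf t, abs_nonneg c, neg_abs_le c, le_abs_self c]
    nlinarith [abs_nonneg C]

lemma exists_abs_summatory_pow_sub_le {f : ArithmeticFunction ℝ} (hf : ∀ n, 0 ≤ f n)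
    {c A θ : ℝ} (hA : 0 ≤ A) (hθ0 : 0 ≤ θ) (hθ1 : θ < 1)
    (hS : ∀ t, 1 ≤ t → |summatory f t - c * t| ≤ A * t ^ θ) (k : ℕ) :
    ∃ C, 0 ≤ C ∧ ∀ x, 1 ≤ x →
      |summatory (f ^ (k + 2)) x - c ^ (k + 2) * x * log x ^ (k + 1) / (k + 1)!|
        ≤ C * x * (1 + log x) ^ k := by
  have hθ : 0 < 1 - θ := by linarith
  induction k with
  | zero =>
    refine ⟨|c| * (|c| + A + A / (1 - θ)) + A * (|c| + A) / (1 - θ), by positivity,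
      fun x hx => ?_⟩
    have hfS : ∀ t ∈ Set.Icc 1 x, summatory f t ≤ (|c| + A) * t * (1 + log t) ^ 0 := by
      intro t ht
      have ht0 : 0 < t := zero_lt_one.trans_le ht.1
      have : t ^ θ ≤ t := by simpa using rpow_le_rpow_of_exponent_le ht.1 hθ1.le
      nlinarith [abs_le.mp (hS t ht.1), le_abs_self c]
    have hfD := abs_sum_div_sub_mul_log_le hA hθ1 hx fun t ht => hS t ht.1
    have key := abs_summatory_mul_sub_le_of_bounds (a := c) hf hA hθ0 hθ1 (by positivity) hx
      (fun t ht => hS t ht.1) hfS (by simpa using hfD)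
    simpa [sq] using key
  | succ k ih =>
    obtain ⟨C, hC, hbound⟩ := ih
    refine ⟨|c| * (|c ^ (k + 2)| / (k + 1)! + 2 * C)
      + A * (|c ^ (k + 2)| / (k + 1)! + C) / (1 - θ), by positivity, fun x hx => ?_⟩
    rw [pow_succ f, pow_succ' c]
    exact abs_summatory_mul_sub_le_of_bounds (ArithmeticFunction.pow_apply_nonneg hf _) hA hθ0 hθ1
      (by positivity) hx (fun t ht => hS t ht.1)
      (fun t ht => summatory_le_of_abs_sub_le hC ht.1 (hbound t ht.1))
      (abs_sum_div_sub_log_pow_le hC hx fun t ht => hbound t ht.1)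

lemma isBigO_rpow_mul_inv_log {θ : ℝ} (hθ : θ < 1) :
    (fun x : ℝ => x ^ θ) =O[atTop] fun x => x * (log x)⁻¹ := by
  have hlog : log =O[atTop] fun x => x ^ (1 - θ) :=
    (isLittleO_log_rpow_atTop (by linarith)).isBigO
  have hinv := hlog.inv_rev ((eventually_gt_atTop 1).mono fun x hx h0 =>
    absurd h0 (log_pos hx).ne')
  refine ((Asymptotics.isBigO_refl (fun x : ℝ => x) atTop).mul hinv).congr' ?_ EventuallyEq.rfl
  filter_upwards [eventually_gt_atTop 0] with x hx
  have := rpow_sub hx 1 (1 - θ)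
  rw [rpow_one, sub_sub_cancel] at this
  rw [this, div_eq_mul_inv]

lemma isBigO_one_add_log_pow (n : ℕ) :
    (fun x : ℝ => (1 + log x) ^ n) =O[atTop] fun x => log x ^ n := by
  refine (Asymptotics.IsBigO.of_bound 2 ?_).pow n
  filter_upwards [eventually_ge_atTop (exp 1)] with x hx
  have : 1 ≤ log x := (le_log_iff_exp_le (exp_pos 1 |>.trans_le hx)).mpr hx
  rw [norm_eq_abs, norm_eq_abs, abs_of_nonneg (by linarith), abs_of_nonneg (by linarith)]
  linarith

lemma isBigO_summatory_pow_sub {f : ArithmeticFunction ℝ} (hf : ∀ n, 0 ≤ f n) {c θ : ℝ}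
    (hθ0 : 0 ≤ θ) (hθ1 : θ < 1) (h : (fun x => summatory f x - c * x) =O[atTop] fun x => x ^ θ)
    (k : ℕ) :
    (fun x => summatory (f ^ (k + 2)) x - c ^ (k + 2) * x * log x ^ (k + 1) / (k + 1)!)
      =O[atTop] fun x => x * log x ^ k := by
  obtain ⟨A, hA, hS⟩ := exists_abs_summatory_sub_le hf hθ0 h
  obtain ⟨C, -, hC⟩ := exists_abs_summatory_pow_sub_le hf hA hθ0 hθ1 hS k
  refine (Asymptotics.IsBigO.of_bound C ?_).trans
    ((Asymptotics.isBigO_refl _ _).mul (isBigO_one_add_log_pow k))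
  filter_upwards [eventually_ge_atTop 1] with x hx
  have hpos : 0 ≤ x * (1 + log x) ^ k :=
    mul_nonneg (by linarith) (pow_nonneg (by linarith [log_nonneg hx]) k)
  rw [norm_eq_abs, norm_eq_abs, abs_of_nonneg hpos, ← mul_assoc]
  exact hC x hx

theorem sum_dirichlet_convolution_pow_asymptotic_general
    (f : ArithmeticFunction ℝ) (hf : ∀ n, 0 ≤ f n) (c : ℝ)
    (h : (fun M : ℝ => (∑ m ∈ Finset.Icc 1 ⌊M⌋₊, f m) - c * M)
      =O[atTop] fun M : ℝ => M ^ ((3 : ℝ) / 5))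
    (k : ℕ) (hk : 1 ≤ k) :
    (fun M : ℝ =>
        (∑ m ∈ Finset.Icc 1 ⌊M⌋₊, (f ^ k) m)
          - c ^ k * M * Real.log M ^ (k - 1) / (Nat.factorial (k - 1)))
      =O[atTop] fun M : ℝ => M * Real.log M ^ ((k : ℤ) - 2) := by
  obtain ⟨j, rfl⟩ := Nat.exists_eq_add_of_le' hk
  rcases j with _ | j
  · simpa using h.trans (isBigO_rpow_mul_inv_log (by norm_num))
  have hexp : ∀ x : ℝ, log x ^ (((j + 1 + 1 : ℕ) : ℤ) - 2) = log x ^ j := fun x => by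
    rw [show ((j + 1 + 1 : ℕ) : ℤ) - 2 = j by push_cast; ring, zpow_natCast]
  simp only [hexp, Nat.add_sub_cancel]
  exact isBigO_summatory_pow_sub hf (by norm_num) (by norm_num) h j

/-- If `f` is a nonnegative arithmetic function with
`∑_{m ≤ M} f(m) = c·M + O(M^{3/5})`, then for every `k ≥ 1`,
`∑_{m ≤ M} f^{*k}(m) = c^k · M · (log M)^{k-1}/(k-1)! + O(M (log M)^{k-2})`. -/
theorem sum_dirichlet_convolution_pow_asymptotic
    (f : ArithmeticFunction ℝ) (hf : ∀ n, 0 ≤ f n) (c : ℝ) (hc : 0 ≤ c)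
    (h : (fun M : ℝ => (∑ m ∈ Finset.Icc 1 ⌊M⌋₊, f m) - c * M)
      =O[atTop] fun M : ℝ => M ^ ((3 : ℝ) / 5))
    (k : ℕ) (hk : 1 ≤ k) :
    (fun M : ℝ =>
        (∑ m ∈ Finset.Icc 1 ⌊M⌋₊, (f ^ k) m)
          - c ^ k * M * Real.log M ^ (k - 1) / (Nat.factorial (k - 1)))
      =O[atTop] fun M : ℝ => M * Real.log M ^ ((k : ℤ) - 2) :=
  sum_dirichlet_convolution_pow_asymptotic_general f hf c h k hk
end

section
/- Let f : {1,2,3,...} → ℝ be a nonnegative arithmetic function and let c ≥ 0 be a real number such that ∑_{m ≤ M} f(m) = c·M + O(M^{3/5}) as M → ∞. Fix integers k ≥ 1 and n ≥ 0 and a real number A ≥ 1. Then there is a constant C (depending only on f, k, n, A) such that for all real M ≥ 3, all real M' with M ≤ M' ≤ M^A, and all complex γ with |γ| ≤ A/log M, one has |∑_{m ≤ M} f^{*k}(m)·(log(M'/m))^n·(M'/m)^{-γ}/m − (c^k (M')^{-γ} (log M)^k/(k-1)!)·∫_0^1 M^{γ r} r^{k-1} (log(M'/M^r))^n dr| ≤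 C (log M)^{k+n-1}. -/
/-!
Write `S(t) = ∑_{m ≤ t} f(m) = c (t - 1) + O(t^{3/5})`. Abel summation against `log(t/s)^j / s`,
whose derivative is `O((1 + log t)^j / s²)`, gives
`∑_{m ≤ t} f(m) log(t/m)^j / m = c log^{j+1} t / (j + 1) + O((1 + log t)^j)`.
Splitting `f^{*(k+1)} = f * f^{*k}` over the first factor and using the cases `j = 0` and
`j = k + 1`, induction on `k` gives
`∑_{m ≤ t} f^{*k}(m) / m = c^k log^k t / k! + O((1 + log t)^{k-1})`.

A second Abel summation, against `x^n e^{-γx}` at `x = log(M'/s)`, replaces this partial sum by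
the smooth main term `c^k log^k s / k!`, and the substitution `s = M^r` turns the resulting
integral into the one in the statement. On `[1, M]` one has `0 ≤ log(M'/s) ≤ A log M`, so
`|γ x| ≤ A²`: the weight is `O((log M)^n)` and its derivative `O((log M)^{n-1} / s)`, whence the
error `O((log M)^{k+n-1})`.
-/

open Filter Finset MeasureTheory Real
open scoped Nat

section Abel

variable {𝕜 : Type*} [RCLike 𝕜] (a : ℕ → 𝕜) {b : ℝ} {w w' H H' : ℝ → 𝕜}

theorem sum_Icc_zero_mul_update_eq (g : ℕ → 𝕜) (N : ℕ) :
    ∑ k ∈ Icc 0 N, g k * Function.update a 0 0 k = ∑ k ∈ Icc 1 N, g k * a k := by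
  rw [Icc_eq_cons_Ioc (Nat.zero_le N), sum_cons, ← Icc_add_one_left_eq_Ioc,
    Function.update_self, mul_zero, zero_add]
  exact sum_congr rfl fun k hk => by
    rw [Function.update_of_ne (by simp at hk; omega)]

theorem sum_Icc_zero_update_eq (N : ℕ) :
    ∑ k ∈ Icc 0 N, Function.update a 0 0 k = ∑ k ∈ Icc 1 N, a k := by
  simpa using sum_Icc_zero_mul_update_eq a 1 N

theorem integrableOn_mul_sum_Icc_one (hw' : IntegrableOn w' (Set.Icc 1 b)) :
    IntegrableOn (fun s => w' s * ∑ k ∈ Icc 1 ⌊s⌋₊, a k) (Set.Ioc 1 b) := by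
  simpa only [sum_Icc_zero_update_eq] using
    (integrableOn_mul_sum_Icc (Function.update a 0 0) (m := 0) zero_le_one hw').mono_set
      Set.Ioc_subset_Icc_self

theorem sum_Icc_one_mul_eq_sub_integral_mul (hw : ∀ s ∈ Set.Icc 1 b, HasDerivAt w (w' s) s)
    (hw' : ContinuousOn w' (Set.Icc 1 b)) :
    ∑ k ∈ Icc 1 ⌊b⌋₊, w k * a k =
      w b * ∑ k ∈ Icc 1 ⌊b⌋₊, a k -
        ∫ s in Set.Ioc 1 b, w' s * ∑ k ∈ Icc 1 ⌊s⌋₊, a k := by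
  have hderiv : Set.EqOn (deriv w) w' (Set.Icc 1 b) := fun s hs => (hw s hs).deriv
  have habel := sum_mul_eq_sub_integral_mul₀ (Function.update a 0 0) (Function.update_self ..) b
    (fun s hs => (hw s hs).differentiableAt)
    (hw'.integrableOn_Icc.congr_fun hderiv.symm measurableSet_Icc)
  simp only [sum_Icc_zero_mul_update_eq, sum_Icc_zero_update_eq] at habel
  rw [habel, setIntegral_congr_fun measurableSet_Ioc
    fun s hs => by rw [hderiv (Set.Ioc_subset_Icc_self hs)]]

theorem sum_mul_sub_integral_deriv_mul_eq (hb : 1 ≤ b)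
    (hw : ∀ s ∈ Set.Icc 1 b, HasDerivAt w (w' s) s) (hw' : ContinuousOn w' (Set.Icc 1 b))
    (hH : ∀ s ∈ Set.Icc 1 b, HasDerivAt H (H' s) s) (hH' : ContinuousOn H' (Set.Icc 1 b))
    (hH1 : H 1 = 0) :
    ∑ k ∈ Icc 1 ⌊b⌋₊, w k * a k - ∫ s in 1..b, H' s * w s =
      w b * (∑ k ∈ Icc 1 ⌊b⌋₊, a k - H b) -
        ∫ s in Set.Ioc 1 b, w' s * (∑ k ∈ Icc 1 ⌊s⌋₊, a k - H s) := by
  have hw_cont : ContinuousOn w (Set.Icc 1 b) :=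
    fun s hs => (hw s hs).continuousAt.continuousWithinAt
  have hH_cont : ContinuousOn H (Set.Icc 1 b) :=
    fun s hs => (hH s hs).continuousAt.continuousWithinAt
  have hparts : ∫ s in 1..b, (H' s * w s + H s * w' s) = H b * w b := by
    rw [intervalIntegral.integral_eq_sub_of_hasDerivAt (f := fun s => H s * w s)
      (fun s hs => (hH s (Set.uIcc_of_le hb ▸ hs)).mul (hw s (Set.uIcc_of_le hb ▸ hs)))
      (((hH'.mul hw_cont).add (hH_cont.mul hw')).intervalIntegrable_of_Icc hb), hH1, zero_mul,
      sub_zero]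
  rw [intervalIntegral.integral_add (f := fun s => H' s * w s) (g := fun s => H s * w' s)
    ((hH'.mul hw_cont).intervalIntegrable_of_Icc hb)
    ((hH_cont.mul hw').intervalIntegrable_of_Icc hb), intervalIntegral.integral_of_le hb,
    intervalIntegral.integral_of_le hb] at hparts
  have hint_H : IntegrableOn (fun s => w' s * H s) (Set.Ioc 1 b) :=
    (hw'.mul hH_cont).integrableOn_Icc.mono_set Set.Ioc_subset_Icc_self
  simp only [mul_sub]
  rw [integral_sub (integrableOn_mul_sum_Icc_one a hw'.integrableOn_Icc) hint_H,
    sum_Icc_one_mul_eq_sub_integral_mul a hw hw', intervalIntegral.integral_of_le hb]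
  simp only [mul_comm (w' _) (H _)]
  linear_combination -hparts

theorem norm_sum_mul_sub_integral_deriv_mul_le (hb : 1 ≤ b)
    (hw : ∀ s ∈ Set.Icc 1 b, HasDerivAt w (w' s) s) (hw' : ContinuousOn w' (Set.Icc 1 b))
    (hH : ∀ s ∈ Set.Icc 1 b, HasDerivAt H (H' s) s) (hH' : ContinuousOn H' (Set.Icc 1 b))
    (hH1 : H 1 = 0) {e g : ℝ → ℝ}
    (he : ∀ s ∈ Set.Icc 1 b, ‖∑ k ∈ Icc 1 ⌊s⌋₊, a k - H s‖ ≤ e s)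
    (hg : ∀ s ∈ Set.Icc 1 b, ‖w' s‖ * e s ≤ g s)
    (hg_int : IntervalIntegrable g volume 1 b) :
    ‖∑ k ∈ Icc 1 ⌊b⌋₊, w k * a k - ∫ s in 1..b, H' s * w s‖ ≤
      ‖w b‖ * e b + ∫ s in 1..b, g s := by
  rw [sum_mul_sub_integral_deriv_mul_eq a hb hw hw' hH hH' hH1,
    intervalIntegral.integral_of_le hb]
  refine (norm_sub_le _ _).trans (add_le_add ?_ ?_)
  · rw [norm_mul]
    exact mul_le_mul_of_nonneg_left (he b ⟨hb, le_rfl⟩) (norm_nonneg _)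
  · refine norm_integral_le_of_norm_le hg_int.1 ((ae_restrict_iff' measurableSet_Ioc).mpr
      (ae_of_all _ fun s hs => ?_))
    rw [norm_mul]
    exact (mul_le_mul_of_nonneg_left (he s (Set.Ioc_subset_Icc_self hs)) (norm_nonneg _)).trans
      (hg s (Set.Ioc_subset_Icc_self hs))

end Abel

-- `c (s - 1)` rather than `c s`, so that the main term vanishes at `s = 1`.
theorem exists_abs_sum_sub_mul_sub_one_le {a : ℕ → ℝ} {c θ : ℝ} (hθ : 0 ≤ θ)
    (h : (fun s : ℝ => ∑ m ∈ Icc 1 ⌊s⌋₊, a m - c * s) =O[atTop] fun s => s ^ θ) :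
    ∃ B, 0 ≤ B ∧ ∀ s : ℝ, 1 ≤ s →
      |∑ m ∈ Icc 1 ⌊s⌋₊, a m - c * (s - 1)| ≤ B * s ^ θ := by
  obtain ⟨C₀, hC₀⟩ := h.bound
  obtain ⟨t₀, ht₀⟩ := eventually_atTop.mp hC₀
  set T := ∑ m ∈ Icc 1 ⌊t₀⌋₊, |a m|
  have hT : 0 ≤ T := sum_nonneg fun m _ => abs_nonneg _
  have hc : 0 ≤ |c| * |t₀| := by positivity
  refine ⟨|C₀| + |c| * (1 + |t₀|) + T, by positivity, fun s hs => ?_⟩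
  have hsθ : 1 ≤ s ^ θ := Real.one_le_rpow hs hθ
  rcases le_or_gt t₀ s with hst | hst
  · have hbig := ht₀ s hst
    rw [Real.norm_eq_abs, Real.norm_eq_abs,
      abs_of_nonneg (Real.rpow_nonneg (by linarith) θ)] at hbig
    calc |∑ m ∈ Icc 1 ⌊s⌋₊, a m - c * (s - 1)|
        = |(∑ m ∈ Icc 1 ⌊s⌋₊, a m - c * s) + c| := by ring_nf
      _ ≤ C₀ * s ^ θ + |c| * s ^ θ :=
          (abs_add_le _ _).trans (add_le_add hbig (le_mul_of_one_le_right (abs_nonneg c) hsθ))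
      _ ≤ (|C₀| + |c| * (1 + |t₀|) + T) * s ^ θ := by nlinarith [le_abs_self C₀]
  · have hS : |∑ m ∈ Icc 1 ⌊s⌋₊, a m| ≤ T :=
      (abs_sum_le_sum_abs _ _).trans (sum_le_sum_of_subset_of_nonneg
        (Icc_subset_Icc le_rfl (Nat.floor_le_floor hst.le)) fun m _ _ => abs_nonneg _)
    have hcs : |c * (s - 1)| ≤ |c| * (1 + |t₀|) := by
      rw [abs_mul]
      refine mul_le_mul_of_nonneg_left (abs_le.mpr ⟨?_, ?_⟩) (abs_nonneg c)
      · linarith [abs_nonneg t₀]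
      · linarith [le_abs_self t₀]
    calc |∑ m ∈ Icc 1 ⌊s⌋₊, a m - c * (s - 1)| ≤ T + |c| * (1 + |t₀|) :=
          (abs_sub _ _).trans (add_le_add hS hcs)
      _ ≤ |C₀| + |c| * (1 + |t₀|) + T := by linarith [abs_nonneg C₀]
      _ ≤ _ := le_mul_of_one_le_right (by positivity) hsθ

theorem Real.log_div_mem_Icc {s t : ℝ} (hs : 1 ≤ s) (hst : s ≤ t) :
    log (t / s) ∈ Set.Icc 0 (log t) := by
  rw [Real.log_div (by linarith) (by linarith)]
  exact ⟨by linarith [Real.log_le_log (by linarith) hst], by linarith [Real.log_nonneg hs]⟩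

theorem log_div_mem_Icc_zero_mul_log {A M M' s : ℝ} (hs : 1 ≤ s) (hsM : s ≤ M)
    (hMM' : M ≤ M') (hM'A : M' ≤ M ^ A) : log (M' / s) ∈ Set.Icc 0 (A * log M) := by
  have h := Real.log_div_mem_Icc hs (hsM.trans hMM')
  have hM0 : 0 < M := by linarith
  exact ⟨h.1, h.2.trans (by simpa [Real.log_rpow hM0] using Real.log_le_log (by linarith) hM'A)⟩

theorem Real.hasDerivAt_log_div {t s : ℝ} (ht : t ≠ 0) (hs : s ≠ 0) :
    HasDerivAt (fun s => log (t / s)) (-s⁻¹) s := by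
  have := ((hasDerivAt_inv hs).const_mul t).log (mul_ne_zero ht (inv_ne_zero hs))
  simp only [← div_eq_mul_inv] at this
  convert this using 1
  field_simp

theorem integral_log_div_pow_div {t : ℝ} (ht : 1 ≤ t) (j : ℕ) :
    ∫ s in 1..t, log (t / s) ^ j / s = log t ^ (j + 1) / (j + 1) := by
  have hpos : ∀ s ∈ Set.uIcc 1 t, s ≠ 0 := fun s hs => by
    rw [Set.uIcc_of_le ht] at hs; linarith [hs.1]
  have hderiv : ∀ s ∈ Set.uIcc 1 t,
      HasDerivAt (fun s => -(log (t / s) ^ (j + 1) / (j + 1))) (log (t / s) ^ j / s) s :=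
    fun s hs => (((Real.hasDerivAt_log_div (by linarith) (hpos s hs)).pow (j + 1)).div_const
      ((j : ℝ) + 1)).neg.congr_deriv (by push_cast; field_simp)
  rw [intervalIntegral.integral_eq_sub_of_hasDerivAt hderiv]
  · simp
  · refine ContinuousOn.intervalIntegrable fun s hs => ?_
    have hs0 := hpos s hs
    fun_prop (disch := first | assumption | positivity)

theorem integral_mul_rpow_sub_two_le {C θ t : ℝ} (hC : 0 ≤ C) (hθ : θ < 1) (ht : 1 ≤ t) :
    ∫ s in 1..t, C * s ^ (θ - 2) ≤ C / (1 - θ) := by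
  rw [intervalIntegral.integral_const_mul, integral_rpow (Or.inr ⟨by linarith, by
      rw [Set.uIcc_of_le ht]; exact fun h => by linarith [h.1]⟩),
    Real.one_rpow, show θ - 2 + 1 = -(1 - θ) by ring, div_neg, ← neg_div, neg_sub, mul_div,
    div_le_div_iff_of_pos_right (by linarith)]
  nlinarith [Real.rpow_nonneg (by linarith : (0 : ℝ) ≤ t) (-(1 - θ))]

theorem abs_log_div_self_pow_div_mul_le {B θ t : ℝ} (hB : 0 ≤ B) (hθ : θ ≤ 1)
    (ht : 1 ≤ t) (j : ℕ) : |log (t / t) ^ j / t| * (B * t ^ θ) ≤ B := by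
  have ht0 : 0 < t := by linarith
  have hθt : t ^ θ / t ≤ 1 :=
    (div_le_one ht0).mpr (by simpa using Real.rpow_le_rpow_of_exponent_le ht hθ)
  calc |log (t / t) ^ j / t| * (B * t ^ θ) = |(0 : ℝ) ^ j| * (B * (t ^ θ / t)) := by
        rw [div_self ht0.ne', Real.log_one, abs_div, abs_of_pos ht0]
        ring
    _ ≤ 1 * (B * 1) := by
        gcongr; rw [abs_pow, abs_zero]; exact pow_le_one₀ le_rfl zero_le_one
    _ = B := by ring

theorem hasDerivAt_log_div_pow_div {t s : ℝ} (ht : t ≠ 0) (hs : s ≠ 0) (j : ℕ) :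
    HasDerivAt (fun s => log (t / s) ^ j / s)
      (-(j * log (t / s) ^ (j - 1) + log (t / s) ^ j) / s ^ 2) s := by
  refine (((Real.hasDerivAt_log_div ht hs).pow j).div (hasDerivAt_id s) hs).congr_deriv ?_
  simp only [id, Pi.pow_apply]
  field_simp
  ring

theorem abs_neg_add_div_sq_le {t s : ℝ} (hs : 1 ≤ s) (hst : s ≤ t) (j : ℕ) :
    |-(j * log (t / s) ^ (j - 1) + log (t / s) ^ j) / s ^ 2| ≤
      (j + 1) * (1 + log t) ^ j / s ^ 2 := by
  obtain ⟨h0, h1⟩ := Real.log_div_mem_Icc hs hst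
  have h1' : log (t / s) ≤ 1 + log t := by linarith
  have hpow : log (t / s) ^ (j - 1) ≤ (1 + log t) ^ j :=
    (pow_le_pow_left₀ h0 h1' _).trans (pow_le_pow_right₀ (by linarith) (Nat.sub_le j 1))
  rw [abs_div, abs_neg, abs_of_nonneg (by positivity), abs_of_nonneg (by positivity)]
  gcongr
  nlinarith [pow_le_pow_left₀ h0 h1' j, (Nat.cast_nonneg j : (0 : ℝ) ≤ j)]

theorem abs_sum_mul_log_div_pow_div_sub_le {a : ℕ → ℝ} {c B θ : ℝ} (hθ : θ < 1)
    (hB : 0 ≤ B) (ha : ∀ s : ℝ, 1 ≤ s → |∑ m ∈ Icc 1 ⌊s⌋₊, a m - c * (s - 1)| ≤ B * s ^ θ)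
    (j : ℕ) {t : ℝ} (ht : 1 ≤ t) :
    |∑ m ∈ Icc 1 ⌊t⌋₊, a m * log (t / m) ^ j / m - c * log t ^ (j + 1) / (j + 1)| ≤
      B * (1 + (j + 1) / (1 - θ)) * (1 + log t) ^ j := by
  set L := log t
  have hL : 0 ≤ L := Real.log_nonneg ht
  set w' : ℝ → ℝ := fun s => -(j * log (t / s) ^ (j - 1) + log (t / s) ^ j) / s ^ 2
  have hw' : ContinuousOn w' (Set.Icc 1 t) := fun s hs => by
    have hs0 : s ≠ 0 := by linarith [hs.1]
    fun_prop (disch := first | assumption | positivity)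
  have hg : ∀ s ∈ Set.Icc 1 t,
      ‖w' s‖ * (B * s ^ θ) ≤ B * (j + 1) * (1 + L) ^ j * s ^ (θ - 2) := fun s hs => by
    rw [Real.rpow_sub (by linarith [hs.1]), Real.rpow_two, Real.norm_eq_abs]
    calc |w' s| * (B * s ^ θ) ≤ (j + 1) * (1 + L) ^ j / s ^ 2 * (B * s ^ θ) :=
          mul_le_mul_of_nonneg_right (abs_neg_add_div_sq_le hs.1 hs.2 j)
            (mul_nonneg hB (Real.rpow_nonneg (by linarith [hs.1]) θ))
      _ = _ := by ring
  have hg_int : IntervalIntegrable (fun s => B * (j + 1) * (1 + L) ^ j * s ^ (θ - 2)) volume 1 t :=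
    (intervalIntegral.intervalIntegrable_rpow (Or.inr (by
      rw [Set.uIcc_of_le ht]; exact fun h => by linarith [h.1]))).const_mul _
  have key := norm_sum_mul_sub_integral_deriv_mul_le a ht
    (fun s hs => hasDerivAt_log_div_pow_div (by linarith) (by linarith [hs.1]) j) hw'
    (fun s _ => (((hasDerivAt_id s).sub_const 1).const_mul c).congr_deriv (mul_one c))
    continuousOn_const (by simp) (fun s hs => ha s hs.1) hg hg_int
  rw [intervalIntegral.integral_const_mul, integral_log_div_pow_div ht, ← mul_div_assoc,
    Real.norm_eq_abs, Real.norm_eq_abs] at key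
  have hsum : ∑ m ∈ Icc 1 ⌊t⌋₊, a m * log (t / m) ^ j / m =
      ∑ m ∈ Icc 1 ⌊t⌋₊, log (t / m) ^ j / m * a m := sum_congr rfl fun m _ => by ring
  rw [hsum]
  calc _ ≤ B + B * (j + 1) * (1 + L) ^ j / (1 - θ) :=
        key.trans (add_le_add (abs_log_div_self_pow_div_mul_le hB hθ.le ht j)
          (integral_mul_rpow_sub_two_le (by positivity) hθ ht))
    _ ≤ B * (1 + L) ^ j + B * (j + 1) * (1 + L) ^ j / (1 - θ) := by
        gcongr; exact le_mul_of_one_le_right hB (one_le_pow₀ (by linarith))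
    _ = B * (1 + (j + 1) / (1 - θ)) * (1 + L) ^ j := by ring

theorem abs_sum_div_mul_sub_le {f : ℕ → ℝ} (hf : ∀ n, 0 ≤ f n) {G P : ℝ → ℝ} {C t : ℝ}
    (hG : ∀ u, 1 ≤ u → u ≤ t → |G u - P u| ≤ C) :
    |∑ d ∈ Icc 1 ⌊t⌋₊, f d / d * (G (t / d) - P (t / d))| ≤
      C * ∑ d ∈ Icc 1 ⌊t⌋₊, f d / d := by
  refine (abs_sum_le_sum_abs _ _).trans ?_
  rw [mul_sum]
  refine sum_le_sum fun d hd => ?_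
  obtain ⟨hd1, hdt⟩ := mem_Icc.mp hd
  have ht : 1 ≤ t := (Nat.one_le_floor_iff t).mp (hd1.trans hdt)
  have hd1' : (1 : ℝ) ≤ d := by exact_mod_cast hd1
  have hdt' : (d : ℝ) ≤ t := (Nat.cast_le.mpr hdt).trans (Nat.floor_le (by linarith))
  have hfd : 0 ≤ f d / d := div_nonneg (hf d) d.cast_nonneg
  rw [abs_mul, abs_of_nonneg hfd, mul_comm C]
  exact mul_le_mul_of_nonneg_left (hG _ ((one_le_div (by linarith)).mpr hdt')
    (div_le_self (by linarith) hd1')) hfd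

namespace ArithmeticFunction

theorem sum_Icc_floor_mul_div_eq (f g : ArithmeticFunction ℝ) (t : ℝ) :
    ∑ m ∈ Icc 1 ⌊t⌋₊, (f * g) m / m =
      ∑ d ∈ Icc 1 ⌊t⌋₊, f d / d * ∑ e ∈ Icc 1 ⌊t / d⌋₊, g e / e := by
  let f' : ArithmeticFunction ℝ := ⟨fun n => f n / n, by simp⟩
  let g' : ArithmeticFunction ℝ := ⟨fun n => g n / n, by simp⟩
  have hmul (m : ℕ) : (f * g) m / m = (f' * g') m := by
    rw [mul_apply, mul_apply, sum_div]
    refine sum_congr rfl fun p hp => ?_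
    obtain ⟨rfl, hm⟩ := Nat.mem_divisorsAntidiagonal.mp hp
    have h1 : (p.1 : ℝ) ≠ 0 := by exact_mod_cast left_ne_zero_of_mul hm
    have h2 : (p.2 : ℝ) ≠ 0 := by exact_mod_cast right_ne_zero_of_mul hm
    simp only [f', g', coe_mk, Nat.cast_mul]
    field_simp
  simp only [hmul, Nat.floor_div_natCast]
  rw [← zero_add 1, Icc_add_one_left_eq_Ioc, sum_Ioc_mul_eq_sum_sum]
  rfl

section Convolution

variable {f : ArithmeticFunction ℝ} {c : ℝ} {Cf : ℕ → ℝ}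

theorem abs_sum_mul_div_sub_le (hf : ∀ n, 0 ≤ f n)
    (hQ : ∀ (j : ℕ) (t : ℝ), 1 ≤ t →
      |∑ m ∈ Icc 1 ⌊t⌋₊, f m * Real.log (t / m) ^ j / m -
          c * Real.log t ^ (j + 1) / (j + 1)| ≤ Cf j * (1 + Real.log t) ^ j)
    {g : ArithmeticFunction ℝ} {D C : ℝ} {k : ℕ}
    (hg : ∀ t : ℝ, 1 ≤ t →
      |∑ m ∈ Icc 1 ⌊t⌋₊, g m / m - D * Real.log t ^ (k + 1)| ≤ C * (1 + Real.log t) ^ k)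
    {t : ℝ} (ht : 1 ≤ t) :
    |∑ m ∈ Icc 1 ⌊t⌋₊, (f * g) m / m - D * (c * Real.log t ^ (k + 2) / (k + 2))| ≤
      (C * (|c| + Cf 0) + |D| * Cf (k + 1)) * (1 + Real.log t) ^ (k + 1) := by
  set L := Real.log t
  have hL : 0 ≤ L := Real.log_nonneg ht
  have hC : 0 ≤ C := by simpa using (abs_nonneg _).trans (hg 1 le_rfl)
  have hf_sum : ∑ d ∈ Icc 1 ⌊t⌋₊, f d / d ≤ (|c| + Cf 0) * (1 + L) := by
    have := (abs_le.mp (by simpa using hQ 0 t ht)).2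
    have hCf : 0 ≤ Cf 0 := by simpa using (abs_nonneg _).trans (hQ 0 1 le_rfl)
    nlinarith [le_abs_self c, abs_nonneg c]
  have hfk : |∑ d ∈ Icc 1 ⌊t⌋₊, f d * Real.log (t / d) ^ (k + 1) / d -
      c * L ^ (k + 2) / (k + 2)| ≤ Cf (k + 1) * (1 + L) ^ (k + 1) := by
    convert hQ (k + 1) t ht using 4; push_cast; ring
  have hfirst := abs_sum_div_mul_sub_le (t := t) (C := C * (1 + L) ^ k) hf
    (G := fun u => ∑ e ∈ Icc 1 ⌊u⌋₊, g e / e) (P := fun u => D * Real.log u ^ (k + 1))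
    fun u hu hut => (hg u hu).trans (mul_le_mul_of_nonneg_left (pow_le_pow_left₀
      (by linarith [Real.log_nonneg hu]) (by linarith [Real.log_le_log (by linarith) hut]) k) hC)
  have hsplit : ∑ d ∈ Icc 1 ⌊t⌋₊, f d / d * ∑ e ∈ Icc 1 ⌊t / d⌋₊, g e / e -
        D * (c * L ^ (k + 2) / (k + 2)) =
      ∑ d ∈ Icc 1 ⌊t⌋₊, f d / d *
          (∑ e ∈ Icc 1 ⌊t / d⌋₊, g e / e - D * Real.log (t / d) ^ (k + 1)) +
        D * (∑ d ∈ Icc 1 ⌊t⌋₊, f d * Real.log (t / d) ^ (k + 1) / d -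
          c * L ^ (k + 2) / (k + 2)) := by
    simp only [mul_sub, sum_sub_distrib, mul_sum]
    rw [sum_congr rfl fun d _ => (by ring : f d / d * (D * Real.log (t / d) ^ (k + 1)) =
      D * (f d * Real.log (t / d) ^ (k + 1) / d))]
    ring
  rw [sum_Icc_floor_mul_div_eq, hsplit]
  refine (abs_add_le _ _).trans ?_
  rw [abs_mul]
  calc _ ≤ C * (1 + L) ^ k * ((|c| + Cf 0) * (1 + L)) + |D| * (Cf (k + 1) * (1 + L) ^ (k + 1)) :=
        add_le_add (hfirst.trans (by gcongr)) (mul_le_mul_of_nonneg_left hfk (abs_nonneg D))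
    _ = _ := by ring

theorem exists_abs_sum_pow_div_sub_le (hf : ∀ n, 0 ≤ f n)
    (hQ : ∀ (j : ℕ) (t : ℝ), 1 ≤ t →
      |∑ m ∈ Icc 1 ⌊t⌋₊, f m * Real.log (t / m) ^ j / m -
          c * Real.log t ^ (j + 1) / (j + 1)| ≤ Cf j * (1 + Real.log t) ^ j) (k : ℕ) :
    ∃ C, ∀ t : ℝ, 1 ≤ t →
      |∑ m ∈ Icc 1 ⌊t⌋₊, (f ^ (k + 1)) m / m -
          c ^ (k + 1) * Real.log t ^ (k + 1) / (k + 1)!| ≤ C * (1 + Real.log t) ^ k := by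
  induction k with
  | zero => exact ⟨Cf 0, fun t ht => by simpa using hQ 0 t ht⟩
  | succ k ih =>
    obtain ⟨C, hC⟩ := ih
    refine ⟨C * (|c| + Cf 0) + |c ^ (k + 1) / (k + 1)!| * Cf (k + 1), fun t ht => ?_⟩
    have hmain : c ^ (k + 1) / (k + 1)! * (c * Real.log t ^ (k + 2) / (k + 2)) =
        c ^ (k + 1 + 1) * Real.log t ^ (k + 1 + 1) / (k + 1 + 1)! := by
      rw [Nat.factorial_succ (k + 1)]
      push_cast
      field_simp
      ring
    rw [pow_succ', ← hmain]
    exact abs_sum_mul_div_sub_le hf hQ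
      (fun t ht => by simpa only [div_mul_eq_mul_div] using hC t ht) ht

end Convolution

end ArithmeticFunction

theorem integral_inv_smul_comp_log {E : Type*} [NormedAddCommGroup E] [NormedSpace ℝ E]
    {g : ℝ → E} (hg : Continuous g) {M : ℝ} (hM : 0 < M) :
    ∫ s in 1..M, s⁻¹ • g (log s) = log M • ∫ r in 0..1, g (r * log M) := by
  have hpos : ∀ s ∈ Set.uIcc 1 M, 0 < s := fun s hs =>
    lt_of_lt_of_le (lt_min one_pos hM) hs.1
  have := intervalIntegral.integral_deriv_smul_comp
    (fun s hs => Real.hasDerivAt_log (hpos s hs).ne')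
    (ContinuousOn.inv₀ continuousOn_id fun s hs => (hpos s hs).ne') hg
  rw [intervalIntegral.smul_integral_comp_mul_right, zero_mul, one_mul]
  simpa using this

section Weight

variable (n : ℕ) (γ : ℂ)

-- At `x = log (M' / m)` this is the weight `(log (M' / m))ⁿ (M' / m)^{-γ}` of the statement.
noncomputable def powMulExp (x : ℝ) : ℂ := ((x ^ n : ℝ) : ℂ) * Complex.exp (-γ * x)

-- At `x = log (M' / m)` this is the weight `(log (M' / m))ⁿ (M' / m)^{-γ}` of the statement.
noncomputable def powMulExpDeriv (x : ℝ) : ℂ :=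
  ((n * x ^ (n - 1) : ℝ) : ℂ) * Complex.exp (-γ * x) - γ * powMulExp n γ x

theorem hasDerivAt_powMulExp (x : ℝ) : HasDerivAt (powMulExp n γ) (powMulExpDeriv n γ x) x := by
  have hexp :
      HasDerivAt (fun x : ℝ => Complex.exp (-γ * x)) (Complex.exp (-γ * x) * (-γ)) x := by
    simpa using ((Complex.ofRealCLM.hasDerivAt (x := x)).const_mul (-γ)).cexp
  refine (((hasDerivAt_pow n x).ofReal_comp).mul hexp).congr_deriv ?_
  simp only [powMulExpDeriv, powMulExp]
  push_cast
  ring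

@[fun_prop]
theorem continuous_powMulExpDeriv : Continuous (powMulExpDeriv n γ) := by
  unfold powMulExpDeriv powMulExp
  fun_prop

theorem hasDerivAt_powMulExp_log_div {M' s : ℝ} (hM' : M' ≠ 0) (hs : s ≠ 0) :
    HasDerivAt (fun s => powMulExp n γ (log (M' / s)))
      ((-s⁻¹) • powMulExpDeriv n γ (log (M' / s))) s :=
  (hasDerivAt_powMulExp n γ _).scomp s (Real.hasDerivAt_log_div hM' hs)

theorem continuousOn_smul_powMulExpDeriv_log_div {M' : ℝ} (hM' : M' ≠ 0) :
    ContinuousOn (fun s : ℝ => (-s⁻¹) • powMulExpDeriv n γ (log (M' / s))) (Set.Ioi 0) :=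
  fun s hs => by
    have hs0 : s ≠ 0 := ne_of_gt hs
    exact ContinuousAt.continuousWithinAt (by fun_prop (disch := first | assumption | positivity))

variable {n γ}

theorem norm_cexp_neg_mul_le {x : ℝ} (hx : 0 ≤ x) :
    ‖Complex.exp (-γ * x)‖ ≤ exp (‖γ‖ * x) := by
  rw [Complex.norm_exp]
  refine Real.exp_le_exp.mpr ((Complex.re_le_norm _).trans_eq ?_)
  rw [norm_mul, norm_neg, Complex.norm_real, Real.norm_of_nonneg hx]

theorem norm_powMulExp_le {x X : ℝ} (hx : 0 ≤ x) (hxX : x ≤ X) :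
    ‖powMulExp n γ x‖ ≤ X ^ n * exp (‖γ‖ * X) := by
  rw [powMulExp, norm_mul, Complex.norm_real, Real.norm_of_nonneg (by positivity)]
  exact mul_le_mul (pow_le_pow_left₀ hx hxX n)
    ((norm_cexp_neg_mul_le hx).trans (Real.exp_le_exp.mpr (by gcongr))) (norm_nonneg _)
    (pow_nonneg (hx.trans hxX) n)

theorem norm_powMulExpDeriv_le {x X : ℝ} (hx : 0 ≤ x) (hxX : x ≤ X) :
    ‖powMulExpDeriv n γ x‖ ≤ (n * X ^ (n - 1) + ‖γ‖ * X ^ n) * exp (‖γ‖ * X) := by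
  have hexp : ‖Complex.exp (-γ * x)‖ ≤ exp (‖γ‖ * X) :=
    (norm_cexp_neg_mul_le hx).trans (Real.exp_le_exp.mpr (by gcongr))
  refine (norm_sub_le _ _).trans ?_
  have hX : 0 ≤ X := hx.trans hxX
  rw [add_mul, mul_assoc ‖γ‖]
  refine add_le_add ?_ ?_
  · rw [norm_mul, Complex.norm_real, Real.norm_of_nonneg (by positivity)]
    exact mul_le_mul (by gcongr) hexp (norm_nonneg _) (by positivity)
  · rw [norm_mul]
    exact mul_le_mul_of_nonneg_left (norm_powMulExp_le hx hxX) (norm_nonneg _)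

theorem norm_powMulExp_le_of_le_mul {A L x : ℝ} (hL : 0 < L) (hγ : ‖γ‖ ≤ A / L)
    (hx : 0 ≤ x) (hxA : x ≤ A * L) : ‖powMulExp n γ x‖ ≤ A ^ n * L ^ n * exp (A ^ 2) := by
  have hγA : ‖γ‖ * (A * L) ≤ A ^ 2 := by
    calc ‖γ‖ * (A * L) ≤ A / L * (A * L) := by gcongr; linarith
      _ = A ^ 2 := by field_simp
  have hA : 0 ≤ A := by nlinarith
  refine (norm_powMulExp_le hx hxA).trans ?_
  rw [mul_pow]
  gcongr

theorem norm_powMulExpDeriv_mul_le {A L x : ℝ} (hA : 1 ≤ A) (hL : 0 < L)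
    (hγ : ‖γ‖ ≤ A / L) (hx : 0 ≤ x) (hxA : x ≤ A * L) :
    ‖powMulExpDeriv n γ x‖ * L ≤ (n + A) * A ^ n * L ^ n * exp (A ^ 2) := by
  have hγL : ‖γ‖ * L ≤ A := by rwa [le_div_iff₀ hL] at hγ
  have hγA : ‖γ‖ * (A * L) ≤ A ^ 2 := by nlinarith [norm_nonneg γ]
  have hpow : n * (A * L) ^ (n - 1) * L ≤ n * (A ^ n * L ^ n) := by
    rcases n with _ | m
    · simp
    · have hAL : (A * L) ^ m * L ≤ A ^ (m + 1) * L ^ (m + 1) :=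
        calc (A * L) ^ m * L = A ^ m * 1 * (L ^ m * L) := by ring
          _ ≤ A ^ m * A * (L ^ m * L) := by gcongr
          _ = A ^ (m + 1) * L ^ (m + 1) := by ring
      rw [Nat.add_sub_cancel, mul_assoc]
      exact mul_le_mul_of_nonneg_left hAL (by positivity)
  calc ‖powMulExpDeriv n γ x‖ * L
      ≤ (n * (A * L) ^ (n - 1) + ‖γ‖ * (A * L) ^ n) * exp (‖γ‖ * (A * L)) * L := by
        gcongr; exact norm_powMulExpDeriv_le hx hxA
    _ = (n * (A * L) ^ (n - 1) * L + ‖γ‖ * L * (A ^ n * L ^ n)) * exp (‖γ‖ * (A * L)) := by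
        ring
    _ ≤ (n * (A ^ n * L ^ n) + A * (A ^ n * L ^ n)) * exp (A ^ 2) := by gcongr
    _ = (n + A) * A ^ n * L ^ n * exp (A ^ 2) := by ring

theorem norm_smul_powMulExpDeriv_log_div_le {A L M' s : ℝ} (hA : 1 ≤ A) (hL : 0 < L)
    (hγ : ‖γ‖ ≤ A / L) (hs : 0 < s) (hx : log (M' / s) ∈ Set.Icc 0 (A * L)) :
    ‖(-s⁻¹) • powMulExpDeriv n γ (log (M' / s))‖ ≤
      (n + A) * A ^ n * L ^ n * exp (A ^ 2) / L * s⁻¹ := by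
  rw [norm_smul, norm_neg, norm_inv, Real.norm_of_nonneg hs.le, mul_comm]
  exact mul_le_mul_of_nonneg_right
    ((le_div_iff₀ hL).mpr (norm_powMulExpDeriv_mul_le hA hL hγ hx.1 hx.2)) (by positivity)

end Weight

theorem integral_mul_powMulExp_log_div_eq {D M M' : ℝ} {k n : ℕ} {γ : ℂ} (hM : 0 < M)
    (hM' : 0 < M') :
    ∫ s in 1..M, ((D / k ! * (s⁻¹ * log s ^ k) : ℝ) : ℂ) * powMulExp n γ (log (M' / s)) =
      ((D : ℝ) : ℂ) * Complex.exp (-γ * log M') * ((log M ^ (k + 1) / k ! : ℝ) : ℂ) *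
        ∫ r in (0 : ℝ)..1,
          Complex.exp (γ * r * log M) * ((r ^ k * log (M' / M ^ r) ^ n : ℝ) : ℂ) := by
  set L' := log M'
  let G : ℝ → ℂ := fun u => ((D / k ! * u ^ k : ℝ) : ℂ) * powMulExp n γ (L' - u)
  have hG : Continuous G := by unfold G powMulExp; fun_prop
  have hpos : ∀ s ∈ Set.uIcc 1 M, 0 < s := fun s hs => lt_of_lt_of_le (lt_min one_pos hM) hs.1
  have hlhs : ∫ s in 1..M, ((D / k ! * (s⁻¹ * log s ^ k) : ℝ) : ℂ) *
      powMulExp n γ (log (M' / s)) = ∫ s in 1..M, s⁻¹ • G (log s) := by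
    refine intervalIntegral.integral_congr fun s hs => ?_
    simp only [G, Real.log_div hM'.ne' (hpos s hs).ne', Complex.real_smul]
    push_cast
    ring
  have hG_r : ∀ r : ℝ, G (r * log M) =
      ((D / k ! * log M ^ k : ℝ) : ℂ) * Complex.exp (-γ * L') *
        (Complex.exp (γ * r * log M) * ((r ^ k * log (M' / M ^ r) ^ n : ℝ) : ℂ)) := by
    intro r
    simp only [G, powMulExp, Real.log_div hM'.ne' (Real.rpow_pos_of_pos hM r).ne',
      Real.log_rpow hM]
    rw [show -γ * ((L' - r * log M : ℝ) : ℂ) = -γ * L' + γ * r * log M by push_cast; ring,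
      Complex.exp_add]
    push_cast
    ring
  rw [hlhs, integral_inv_smul_comp_log hG hM]
  simp only [hG_r, intervalIntegral.integral_const_mul, Complex.real_smul]
  push_cast
  ring

theorem hasDerivAt_mul_log_pow_div_factorial (D : ℝ) (k : ℕ) {s : ℝ} (hs : s ≠ 0) :
    HasDerivAt (fun s => D * log s ^ (k + 1) / (k + 1)!)
      (D / k ! * (s⁻¹ * log s ^ k)) s := by
  refine (((Real.hasDerivAt_log hs).pow (k + 1)).const_mul D).div_const _ |>.congr_deriv ?_
  rw [Nat.factorial_succ, Nat.add_sub_cancel]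
  push_cast
  field_simp

theorem norm_sum_powMulExp_mul_sub_integral_le {a : ℕ → ℝ} {D CP A : ℝ} {k n : ℕ} (hA : 1 ≤ A)
    (ha : ∀ t : ℝ, 1 ≤ t →
      |∑ m ∈ Icc 1 ⌊t⌋₊, a m / m - D * log t ^ (k + 1) / (k + 1)!| ≤
        CP * (1 + log t) ^ k)
    {M M' : ℝ} (hM : exp 1 ≤ M) (hMM' : M ≤ M') (hM'A : M' ≤ M ^ A) {γ : ℂ}
    (hγ : ‖γ‖ ≤ A / log M) :
    ‖∑ m ∈ Icc 1 ⌊M⌋₊, powMulExp n γ (log (M' / m)) * ((a m / m : ℝ) : ℂ) -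
        ∫ s in 1..M, ((D / k ! * (s⁻¹ * log s ^ k) : ℝ) : ℂ) *
          powMulExp n γ (log (M' / s))‖ ≤
      CP * (1 + log M) ^ k * ((1 + n + A) * A ^ n * log M ^ n * exp (A ^ 2)) := by
  set L := log M
  have hM0 : 0 < M := (Real.exp_pos 1).trans_le hM
  have hM'0 : M' ≠ 0 := (hM0.trans_le hMM').ne'
  have hM1 : 1 ≤ M := by linarith [Real.add_one_le_exp 1]
  have hL : 0 < L := by linarith [(Real.le_log_iff_exp_le hM0).mpr hM]
  have hx (s : ℝ) (hs : s ∈ Set.Icc 1 M) := log_div_mem_Icc_zero_mul_log hs.1 hs.2 hMM' hM'A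
  have hCP : 0 ≤ CP := by simpa using (abs_nonneg _).trans (ha 1 le_rfl)
  set K := (n + A) * A ^ n * L ^ n * exp (A ^ 2)
  have he : ∀ s ∈ Set.Icc 1 M, ‖∑ m ∈ Icc 1 ⌊s⌋₊, ((a m / m : ℝ) : ℂ) -
      ((D * log s ^ (k + 1) / (k + 1)! : ℝ) : ℂ)‖ ≤ CP * (1 + L) ^ k := fun s hs => by
    rw [← Complex.ofReal_sum, ← Complex.ofReal_sub, Complex.norm_real, Real.norm_eq_abs]
    refine (ha s hs.1).trans (mul_le_mul_of_nonneg_left (pow_le_pow_left₀ ?_ ?_ k) hCP)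
    · linarith [Real.log_nonneg hs.1]
    · linarith [Real.log_le_log (by linarith [hs.1]) hs.2]
  have hH' : ContinuousOn (fun s : ℝ => ((D / k ! * (s⁻¹ * log s ^ k) : ℝ) : ℂ))
      (Set.Icc 1 M) := fun s hs => by
    have hs0 : s ≠ 0 := by linarith [hs.1]
    exact ContinuousAt.continuousWithinAt (by fun_prop (disch := first | assumption | positivity))
  have hg_int :
      IntervalIntegrable (fun s : ℝ => K / L * s⁻¹ * (CP * (1 + L) ^ k)) volume 1 M :=
    ((intervalIntegral.intervalIntegrable_inv (fun s hs => ne_of_gt (by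
      rw [Set.uIcc_of_le hM1] at hs; exact one_pos.trans_le hs.1)) continuousOn_id).const_mul
        _).mul_const _
  have key := norm_sum_mul_sub_integral_deriv_mul_le (fun m => ((a m / m : ℝ) : ℂ)) hM1
    (fun s hs => hasDerivAt_powMulExp_log_div n γ hM'0 (by linarith [hs.1]))
    ((continuousOn_smul_powMulExpDeriv_log_div n γ hM'0).mono fun s hs => by
      simp only [Set.mem_Ioi]; linarith [hs.1])
    (fun s hs => (hasDerivAt_mul_log_pow_div_factorial D k (by linarith [hs.1])).ofReal_comp)
    hH' (by simp) he (fun s hs => mul_le_mul_of_nonneg_right (norm_smul_powMulExpDeriv_log_div_le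
      hA hL hγ (by linarith [hs.1]) (hx s hs)) (mul_nonneg hCP (by positivity))) hg_int
  rw [intervalIntegral.integral_mul_const, intervalIntegral.integral_const_mul,
    integral_inv_of_pos one_pos hM0, div_one] at key
  refine key.trans ?_
  calc _ ≤ A ^ n * L ^ n * exp (A ^ 2) * (CP * (1 + L) ^ k) +
        K / L * L * (CP * (1 + L) ^ k) := by
        gcongr
        have hxM := hx M ⟨hM1, le_rfl⟩
        exact norm_powMulExp_le_of_le_mul hL hγ hxM.1 hxM.2
    _ = _ := by field_simp; ring

theorem norm_sum_mul_powMulExp_sub_le {a : ℕ → ℝ} {D CP A : ℝ} {k n : ℕ} (hA : 1 ≤ A)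
    (ha : ∀ t : ℝ, 1 ≤ t →
      |∑ m ∈ Icc 1 ⌊t⌋₊, a m / m - D * log t ^ (k + 1) / (k + 1)!| ≤
        CP * (1 + log t) ^ k)
    {M M' : ℝ} (hM : exp 1 ≤ M) (hMM' : M ≤ M') (hM'A : M' ≤ M ^ A) {γ : ℂ}
    (hγ : ‖γ‖ ≤ A / log M) :
    ‖(∑ m ∈ Icc 1 ⌊M⌋₊, ((a m * log (M' / m) ^ n / m : ℝ) : ℂ) *
          Complex.exp (-γ * log (M' / m))) -
        ((D : ℝ) : ℂ) * Complex.exp (-γ * log M') * ((log M ^ (k + 1) / k ! : ℝ) : ℂ) *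
          ∫ r in (0 : ℝ)..1,
            Complex.exp (γ * r * log M) * ((r ^ k * log (M' / M ^ r) ^ n : ℝ) : ℂ)‖ ≤
      CP * 2 ^ k * ((1 + n + A) * A ^ n * exp (A ^ 2)) * log M ^ (k + n) := by
  have hM0 : 0 < M := (Real.exp_pos 1).trans_le hM
  have hL : 1 ≤ log M := (Real.le_log_iff_exp_le hM0).mpr hM
  have hsum : ∑ m ∈ Icc 1 ⌊M⌋₊, ((a m * log (M' / m) ^ n / m : ℝ) : ℂ) *
      Complex.exp (-γ * log (M' / m)) =
        ∑ m ∈ Icc 1 ⌊M⌋₊, powMulExp n γ (log (M' / m)) * ((a m / m : ℝ) : ℂ) :=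
    sum_congr rfl fun m _ => by simp only [powMulExp]; push_cast; ring
  rw [hsum, ← integral_mul_powMulExp_log_div_eq hM0 (hM0.trans_le hMM')]
  refine (norm_sum_powMulExp_mul_sub_integral_le hA ha hM hMM' hM'A hγ).trans ?_
  have hCP : 0 ≤ CP := by simpa using (abs_nonneg _).trans (ha 1 le_rfl)
  have h2L : (1 + log M) ^ k ≤ 2 ^ k * log M ^ k := by
    rw [← mul_pow]; exact pow_le_pow_left₀ (by linarith) (by linarith) k
  calc CP * (1 + log M) ^ k * ((1 + n + A) * A ^ n * log M ^ n * exp (A ^ 2))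
      ≤ CP * (2 ^ k * log M ^ k) * ((1 + n + A) * A ^ n * log M ^ n * exp (A ^ 2)) := by
        gcongr
    _ = _ := by ring

theorem sum_dirichlet_convolution_pow_weighted_asymptotic_general
    (f : ArithmeticFunction ℝ) (hf : ∀ n, 0 ≤ f n) (c : ℝ)
    (h : (fun M : ℝ => (∑ m ∈ Finset.Icc 1 ⌊M⌋₊, f m) - c * M)
      =O[atTop] fun M : ℝ => M ^ ((3 : ℝ) / 5))
    (k n : ℕ) (hk : 1 ≤ k) (A : ℝ) (hA : 1 ≤ A) :
    ∃ C : ℝ, ∀ M : ℝ, 3 ≤ M → ∀ M' : ℝ, M ≤ M' → M' ≤ M ^ A →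
      ∀ γ : ℂ, ‖γ‖ ≤ A / Real.log M →
      ‖(∑ m ∈ Finset.Icc 1 ⌊M⌋₊,
            (((f ^ k) m * Real.log (M' / m) ^ n / m : ℝ) : ℂ)
              * Complex.exp (-γ * Real.log (M' / m)))
          - ((c ^ k : ℝ) : ℂ) * Complex.exp (-γ * Real.log M')
              * ((Real.log M ^ k / (Nat.factorial (k - 1)) : ℝ) : ℂ)
              * ∫ r in (0:ℝ)..1,
                  Complex.exp (γ * r * Real.log M)
                    * ((r ^ (k - 1) * Real.log (M' / M ^ r) ^ n : ℝ) : ℂ)‖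
        ≤ C * Real.log M ^ (k + n - 1) := by
  obtain ⟨k, rfl⟩ := Nat.exists_eq_add_of_le' hk
  obtain ⟨B, hB, hS⟩ := exists_abs_sum_sub_mul_sub_one_le (by norm_num) h
  obtain ⟨CP, hCP⟩ := ArithmeticFunction.exists_abs_sum_pow_div_sub_le hf
    (fun j t ht => abs_sum_mul_log_div_pow_div_sub_le (by norm_num) hB hS j ht) k
  refine ⟨CP * 2 ^ k * ((1 + n + A) * A ^ n * Real.exp (A ^ 2)),
    fun M hM M' hMM' hM'A γ hγ => ?_⟩
  have hM : Real.exp 1 ≤ M := by linarith [Real.exp_one_lt_d9]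
  simpa only [Nat.add_sub_cancel, Nat.add_right_comm k 1 n] using
    norm_sum_mul_powMulExp_sub_le hA hCP hM hMM' hM'A hγ

/-- Uniform version of the weighted sum asymptotic: for `f` nonnegative
with `∑_{m ≤ M} f(m) = c·M + O(M^{3/5})`, `k ≥ 1`, `n ≥ 0`, `A ≥ 1`, there is a constant `C`
such that for all `M ≥ 3`, all `M ≤ M' ≤ M^A` and all complex `γ` with `|γ| ≤ A/log M`,
`∑_{m ≤ M} f^{*k}(m)·(log(M'/m))^n·(M'/m)^{-γ}/m` equals
`(c^k (M')^{-γ} (log M)^k/(k-1)!)·∫₀¹ M^{γ r} r^{k-1} (log(M'/M^r))^n dr`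
up to an error of size at most `C (log M)^{k+n-1}`. -/
theorem sum_dirichlet_convolution_pow_weighted_asymptotic
    (f : ArithmeticFunction ℝ) (hf : ∀ n, 0 ≤ f n) (c : ℝ) (hc : 0 ≤ c)
    (h : (fun M : ℝ => (∑ m ∈ Finset.Icc 1 ⌊M⌋₊, f m) - c * M)
      =O[atTop] fun M : ℝ => M ^ ((3 : ℝ) / 5))
    (k n : ℕ) (hk : 1 ≤ k) (A : ℝ) (hA : 1 ≤ A) :
    ∃ C : ℝ, ∀ M : ℝ, 3 ≤ M → ∀ M' : ℝ, M ≤ M' → M' ≤ M ^ A →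
      ∀ γ : ℂ, ‖γ‖ ≤ A / Real.log M →
      ‖(∑ m ∈ Finset.Icc 1 ⌊M⌋₊,
            (((f ^ k) m * Real.log (M' / m) ^ n / m : ℝ) : ℂ)
              * Complex.exp (-γ * Real.log (M' / m)))
          - ((c ^ k : ℝ) : ℂ) * Complex.exp (-γ * Real.log M')
              * ((Real.log M ^ k / (Nat.factorial (k - 1)) : ℝ) : ℂ)
              * ∫ r in (0:ℝ)..1,
                  Complex.exp (γ * r * Real.log M)
                    * ((r ^ (k - 1) * Real.log (M' / M ^ r) ^ n : ℝ) : ℂ)‖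
        ≤ C * Real.log M ^ (k + n - 1) :=
  sum_dirichlet_convolution_pow_weighted_asymptotic_general f hf c h k n hk A hA
end

section
/- Let ℓ ≥ 2 and k ≥ 0 be integers, let r > 0 and X > 0 be real numbers, and let α ∈ ℂ with |α| < r. Then (1/(2πi)) ∮_{|s|=r} X^s (α+s)^{-(ℓ-1)} s^{-(k+1)} ds = ((log X)^{k+ℓ-1}/(k!·(ℓ-2)!)) ∫_0^1 e^{-α u log X} u^{ℓ-2} (1-u)^k du. -/
/-!
Both sides are power series in `α`. On `|s| = r > |α|` the binomial series
`(α + s)^{-(ℓ-1)} = ∑ₙ C(n+ℓ-2, ℓ-2) (-α)ⁿ s^{-(n+ℓ-1)}` converges uniformly, and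
the Cauchy formula `(2πi)⁻¹ ∮ e^{sL} s^{-(N+1)} ds = L^N / N!` integrates it term by term.
On the other side, expanding `e^{-αuL}` and integrating term by term gives Beta integrals
`B(n+ℓ-1, k+1)`, and the two series agree coefficientwise because
`C(n+ℓ-2, ℓ-2) = (n+ℓ-2)! / ((ℓ-2)! n!)`.
-/

open Complex Metric Set
open scoped Nat Real

section TermwiseIntegration

variable {ι E : Type*} [Countable ι] [NormedAddCommGroup E]

theorem intervalIntegral.hasSum_integral_of_norm_le [NormedSpace ℝ E] {F : ι → ℝ → E}
    {f : ℝ → E} {a b : ℝ} {bound : ι → ℝ} (hF : ∀ i, ContinuousOn (F i) (uIcc a b))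
    (hle : ∀ i, ∀ x ∈ uIcc a b, ‖F i x‖ ≤ bound i) (hbound : Summable bound)
    (hf : ∀ x ∈ uIcc a b, HasSum (fun i ↦ F i x) (f x)) :
    HasSum (fun i ↦ ∫ x in a..b, F i x) (∫ x in a..b, f x) :=
  hasSum_integral_of_dominated_convergence (fun i _ ↦ bound i)
    (fun i ↦ ((hF i).mono uIoc_subset_uIcc).aestronglyMeasurable measurableSet_uIoc)
    (fun i ↦ .of_forall fun x hx ↦ hle i x (uIoc_subset_uIcc hx))
    (.of_forall fun _ _ ↦ hbound) intervalIntegrable_const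
    (.of_forall fun x hx ↦ hf x (uIoc_subset_uIcc hx))

theorem circleIntegral.hasSum_integral_of_norm_le [NormedSpace ℂ E] {F : ι → ℂ → E}
    {f : ℂ → E} {c : ℂ} {R : ℝ} {bound : ι → ℝ}
    (hF : ∀ i, ContinuousOn (F i) (sphere c |R|))
    (hle : ∀ i, ∀ z ∈ sphere c |R|, ‖F i z‖ ≤ bound i) (hbound : Summable bound)
    (hf : ∀ z ∈ sphere c |R|, HasSum (fun i ↦ F i z) (f z)) :
    HasSum (fun i ↦ ∮ z in C(c, R), F i z) (∮ z in C(c, R), f z) := by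
  refine intervalIntegral.hasSum_integral_of_norm_le (bound := fun i ↦ |R| * bound i)
    (fun i ↦ Continuous.continuousOn ?_) (fun i θ _ ↦ ?_) (hbound.mul_left _)
    (fun θ _ ↦ (hf _ (circleMap_mem_sphere' c R θ)).const_smul _)
  · simp only [deriv_circleMap]
    exact ((continuous_circleMap 0 R).mul continuous_const).smul
      ((hF i).comp_continuous (continuous_circleMap c R) (circleMap_mem_sphere' c R))
  · rw [norm_smul, deriv_circleMap, norm_mul, norm_I, mul_one, norm_circleMap_zero]
    exact mul_le_mul_of_nonneg_left (hle i _ (circleMap_mem_sphere' c R θ)) (abs_nonneg R)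

end TermwiseIntegration

theorem circleIntegral_exp_mul_div_pow (τ : ℂ) (n : ℕ) {R : ℝ} (hR : 0 < R) :
    (∮ z in C(0, R), exp (z * τ) / z ^ (n + 1)) = 2 * π * I * τ ^ n / n ! := by
  have hf : DifferentiableOn ℂ (fun z ↦ exp (τ * z)) (closedBall 0 R) := by fun_prop
  have h := hf.circleIntegral_one_div_sub_center_pow_smul hR n
  simp only [iteratedDeriv_cexp_const_mul, sub_zero, smul_eq_mul, mul_zero, exp_zero,
    mul_one] at h
  rw [← div_mul_eq_mul_div, ← h]
  congr 1 with z
  rw [mul_comm z, one_div_mul_eq_div]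

theorem integral_pow_mul_one_sub_pow (m k : ℕ) :
    ∫ u in (0:ℝ)..1, u ^ m * (1 - u) ^ k = (m ! * k ! / (m + k + 1)! : ℝ) := by
  have hB := Gamma_mul_Gamma_eq_betaIntegral (s := m + 1) (t := k + 1)
    (by simp; positivity) (by simp; positivity)
  rw [show (m + 1 : ℂ) + (k + 1) = ↑(m + k + 1) + 1 by push_cast; ring, Gamma_nat_eq_factorial,
    Gamma_nat_eq_factorial, Gamma_nat_eq_factorial, betaIntegral] at hB
  apply ofReal_injective
  rw [← intervalIntegral.integral_ofReal]
  push_cast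
  rw [eq_div_iff (by exact_mod_cast (m + k + 1).factorial_ne_zero), mul_comm, hB]
  simp only [add_sub_cancel_right, cpow_natCast]

theorem hasSum_inv_add_pow_of_norm_lt {𝕜 : Type*} [NormedField 𝕜] [HasSummableGeomSeries 𝕜]
    {α z : 𝕜} (m : ℕ) (h : ‖α‖ < ‖z‖) :
    HasSum (fun n ↦ (n + m).choose m * (-α) ^ n / z ^ (n + m + 1))
      ((α + z) ^ (m + 1))⁻¹ := by
  have hz : z ≠ 0 := norm_pos_iff.mp ((norm_nonneg α).trans_lt h)
  have hq : ‖-α / z‖ < 1 := by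
    rwa [norm_div, norm_neg, div_lt_one (norm_pos_iff.mpr hz)]
  convert (hasSum_choose_mul_geometric_of_norm_lt_one m hq).div_const (z ^ (m + 1)) using 1
  · ext n
    rw [div_pow, add_assoc, pow_add]
    field_simp
  · rw [show 1 - -α / z = (α + z) / z by field_simp; ring, div_pow]
    field_simp

theorem hasSum_circleIntegral_exp_mul_div_add_pow_mul_pow (τ α : ℂ) (m k : ℕ) {R : ℝ}
    (hR : 0 < R) (hα : ‖α‖ < R) :
    HasSum (fun n ↦ (n + m).choose m * (-α) ^ n * (2 * π * I * τ ^ (n + m + k + 1) /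
        (n + m + k + 1)!))
      (∮ z in C(0, R), exp (z * τ) / ((α + z) ^ (m + 1) * z ^ (k + 1))) := by
  have hsphere : ∀ z ∈ sphere (0 : ℂ) |R|, ‖z‖ = R := fun z hz ↦ by
    rw [mem_sphere_zero_iff_norm.mp hz, abs_of_pos hR]
  have hsum := circleIntegral.hasSum_integral_of_norm_le (c := 0) (R := R)
    (F := fun n z ↦ (n + m).choose m * (-α) ^ n * (exp (z * τ) / z ^ (n + m + k + 1 + 1)))
    (f := fun z ↦ exp (z * τ) / ((α + z) ^ (m + 1) * z ^ (k + 1)))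
    (bound := fun n ↦
      (n + m).choose m * ‖α‖ ^ n * (Real.exp (R * ‖τ‖) / R ^ (n + m + k + 2)))
    (fun n ↦ continuousOn_const.mul
      ((by fun_prop : Continuous fun z ↦ exp (z * τ)).continuousOn.div (by fun_prop)
        fun z hz ↦ pow_ne_zero _ (norm_pos_iff.mp (by rw [hsphere z hz]; exact hR))))
    (fun n z hz ↦ ?_) ?_ (fun z hz ↦ ?_)
  · simpa only [circleIntegral.integral_const_mul, circleIntegral_exp_mul_div_pow τ _ hR]
      using hsum
  · simp only [norm_mul, norm_div, norm_pow, norm_neg, Complex.norm_natCast, hsphere z hz]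
    gcongr
    calc ‖exp (z * τ)‖ ≤ Real.exp ‖z * τ‖ := norm_exp_le_exp_norm _
      _ = Real.exp (R * ‖τ‖) := by rw [norm_mul, hsphere z hz]
  · have hq : ‖‖α‖ / R‖ < 1 := by
      rwa [Real.norm_eq_abs, abs_div, abs_norm, abs_of_pos hR, div_lt_one hR]
    refine ((summable_choose_mul_geometric_of_norm_lt_one m hq).mul_right
      (Real.exp (R * ‖τ‖) / R ^ (m + k + 2))).congr fun n ↦ ?_
    rw [div_pow, show n + m + k + 2 = n + (m + k + 2) by ring, pow_add]
    field_simp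
    ring
  · have hz0 : z ≠ 0 := norm_pos_iff.mp (hsphere z hz ▸ hR)
    have hterm : ∀ n : ℕ, exp (z * τ) / z ^ (k + 1) * ((n + m).choose m * (-α) ^ n /
        z ^ (n + m + 1)) =
        (n + m).choose m * (-α) ^ n * (exp (z * τ) / z ^ (n + m + k + 1 + 1)) := by
      intro n
      rw [show n + m + k + 1 + 1 = (n + m + 1) + (k + 1) by ring, pow_add]
      field_simp
      ring
    have hlim : exp (z * τ) / z ^ (k + 1) * ((α + z) ^ (m + 1))⁻¹ =
        exp (z * τ) / ((α + z) ^ (m + 1) * z ^ (k + 1)) := by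
      field_simp
    rw [← funext hterm, ← hlim]
    exact (hasSum_inv_add_pow_of_norm_lt m (hsphere z hz ▸ hα)).mul_left
      (exp (z * τ) / z ^ (k + 1))

theorem hasSum_integral_exp_mul_pow_mul_one_sub_pow (c : ℂ) (m k : ℕ) :
    HasSum (fun n ↦ c ^ n / n ! * ((m + n)! * k ! / (m + n + k + 1)! : ℝ))
      (∫ u in (0:ℝ)..1, exp (c * u) * ((u ^ m * (1 - u) ^ k : ℝ) : ℂ)) := by
  have hsum := intervalIntegral.hasSum_integral_of_norm_le (a := 0) (b := 1)
    (F := fun n (u : ℝ) ↦ c ^ n / n ! * ((u ^ (m + n) * (1 - u) ^ k : ℝ) : ℂ))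
    (f := fun u ↦ exp (c * u) * ((u ^ m * (1 - u) ^ k : ℝ) : ℂ))
    (bound := fun n ↦ ‖c‖ ^ n / n !) (fun n ↦ by fun_prop) (fun n u hu ↦ ?_)
    (Real.summable_pow_div_factorial ‖c‖) (fun u _ ↦ ?_)
  · simpa only [intervalIntegral.integral_const_mul, intervalIntegral.integral_ofReal,
      integral_pow_mul_one_sub_pow] using hsum
  · rw [uIcc_of_le zero_le_one] at hu
    have hu1 : 0 ≤ 1 - u := sub_nonneg.mpr hu.2
    have hu1' : 1 - u ≤ 1 := by linarith [hu.1]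
    rw [norm_mul, norm_div, norm_pow, Complex.norm_natCast, norm_real,
      Real.norm_of_nonneg (mul_nonneg (pow_nonneg hu.1 _) (pow_nonneg hu1 _))]
    exact mul_le_of_le_one_right (by positivity)
      (mul_le_one₀ (pow_le_one₀ hu.1 hu.2) (pow_nonneg hu1 _) (pow_le_one₀ hu1 hu1'))
  · have hterm : ∀ n : ℕ, (c * u) ^ n / n ! * ((u ^ m * (1 - u) ^ k : ℝ) : ℂ) =
        c ^ n / n ! * ((u ^ (m + n) * (1 - u) ^ k : ℝ) : ℂ) := fun n ↦ by
      push_cast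
      ring
    rw [← funext hterm]
    exact (exp_eq_exp_ℂ ▸ NormedSpace.expSeries_div_hasSum_exp (c * u)).mul_right _

theorem circleIntegral_exp_inv_pow_eq_beta_integral_general
    (ℓ k : ℕ) (hℓ : 2 ≤ ℓ) (r X : ℝ) (hr : 0 < r)
    (α : ℂ) (hα : ‖α‖ < r) :
    (1 / (2 * (Real.pi : ℂ) * Complex.I)) *
        (∮ s in C(0, r),
          Complex.exp (s * Real.log X) / ((α + s) ^ (ℓ - 1) * s ^ (k + 1)))
      = ((Real.log X ^ (k + ℓ - 1) /
            ((Nat.factorial k : ℝ) * (Nat.factorial (ℓ - 2) : ℝ)) : ℝ) : ℂ)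
          * ∫ u in (0:ℝ)..1,
              Complex.exp (-α * u * Real.log X) * ((u ^ (ℓ - 2) * (1 - u) ^ k : ℝ) : ℂ) := by
  obtain ⟨m, rfl⟩ : ∃ m, ℓ = m + 2 := ⟨ℓ - 2, by omega⟩
  rw [show m + 2 - 1 = m + 1 by omega, show m + 2 - 2 = m by omega,
    show k + (m + 2) - 1 = k + m + 1 by omega]
  have hcirc := hasSum_circleIntegral_exp_mul_div_add_pow_mul_pow (Real.log X) α m k hr hα
  have hbeta := hasSum_integral_exp_mul_pow_mul_one_sub_pow (-α * Real.log X) m k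
  simp only [mul_right_comm (-α) (Real.log X : ℂ)] at hbeta
  have hcoeff : ∀ n : ℕ,
      ((Real.log X ^ (k + m + 1) / (k ! * m !) : ℝ) : ℂ) *
        ((-α * Real.log X) ^ n / n ! * ((m + n)! * k ! / (m + n + k + 1)! : ℝ)) =
      1 / (2 * π * I) * ((n + m).choose m * (-α) ^ n *
        (2 * π * I * Real.log X ^ (n + m + k + 1) / (n + m + k + 1)!)) := fun n ↦ by
    rw [Nat.cast_choose ℂ (Nat.le_add_left m n), Nat.add_sub_cancel, add_comm n m]
    push_cast
    field_simp [Nat.factorial_ne_zero]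
    ring
  rw [(hcirc.mul_left _).unique (funext hcoeff ▸ hbeta.mul_left _)]

/-- For integers `ℓ ≥ 2`, `k ≥ 0`, reals `r, X > 0` and `α ∈ ℂ` with `|α| < r`:
`(1/(2πi)) ∮_{|s|=r} X^s (α+s)^{-(ℓ-1)} s^{-(k+1)} ds
  = ((log X)^{k+ℓ-1}/(k!·(ℓ-2)!)) ∫₀¹ e^{-αu log X} u^{ℓ-2} (1-u)^k du`. -/
theorem circleIntegral_exp_inv_pow_eq_beta_integral
    (ℓ k : ℕ) (hℓ : 2 ≤ ℓ) (r X : ℝ) (hr : 0 < r) (hX : 0 < X)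
    (α : ℂ) (hα : ‖α‖ < r) :
    (1 / (2 * (Real.pi : ℂ) * Complex.I)) *
        (∮ s in C(0, r),
          Complex.exp (s * Real.log X) / ((α + s) ^ (ℓ - 1) * s ^ (k + 1)))
      = ((Real.log X ^ (k + ℓ - 1) /
            ((Nat.factorial k : ℝ) * (Nat.factorial (ℓ - 2) : ℝ)) : ℝ) : ℂ)
          * ∫ u in (0:ℝ)..1,
              Complex.exp (-α * u * Real.log X) * ((u ^ (ℓ - 2) * (1 - u) ^ k : ℝ) : ℂ) :=
  circleIntegral_exp_inv_pow_eq_beta_integral_general ℓ k hℓ r X hr α hα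
end

section
/- Let m ≥ 1, n ≥ 1 and k ≥ 0 be integers, let r > 0 and q > 0 be real numbers, and let α, β ∈ ℂ with |α| < r and |β| < r. Then (1/(2πi)) ∮_{|u|=r} q^u (α+u)^{-m} (u-β)^{-n} u^{-(k+1)} du = ((log q)^{k+m+n}/(k!·(m-1)!·(n-1)!)) · ∬_{a ≥ 0, b ≥ 0, a+b ≤ 1} (1-a-b)^k q^{-aα+bβ} a^{m-1} b^{n-1} da db. -/
/-!
Write `L = log q` and `N = k + m + n`. For `|u| = r`, Feynman parametrisation combines the three
factors: `(α + u)^{-m} (u - β)^{-n} u^{-(k+1)}` equals `N! / (k! (m-1)! (n-1)!)` times the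
integral over the simplex of `a^{m-1} b^{n-1} (1-a-b)^k (u - w)^{-(N+1)}`, where
`w = -a α + b β` satisfies `|w| < r`. By Cauchy's formula
`(2πi)⁻¹ ∮ e^{uL} (u - w)^{-(N+1)} du = L^N e^{wL} / N!`, and Fubini exchanges the two integrals.

The two-factor Feynman identity behind this follows from the substitution
`x = t A / (t A + (1 - t) B)`. It maps `[0, 1]` to a path from `0` to `1`, and along that path
the polynomial `x^p (1 - x)^q` has a primitive, so the integral becomes the Beta integral
`∫₀¹ x^p (1 - x)^q dx = p! q! / (p + q + 1)!`.
-/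

open Filter MeasureTheory

open Set Metric Complex

theorem Differentiable.intervalIntegral_comp_mul_deriv_eq {f : ℂ → ℂ} (hf : Differentiable ℂ f)
    {γ γ' : ℝ → ℂ} {a b : ℝ} (hγ : ∀ t ∈ uIcc a b, HasDerivAt γ (γ' t) t)
    (hγ' : ContinuousOn γ' (uIcc a b)) (ha : γ a = a) (hb : γ b = b) :
    ∫ t in a..b, f (γ t) * γ' t = ∫ t in a..b, f t := by
  obtain ⟨F, hF⟩ := hf.isExactOn_univ
  have hγc : ContinuousOn γ (uIcc a b) := fun t ht => (hγ t ht).continuousAt.continuousWithinAt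
  rw [intervalIntegral.integral_eq_sub_of_hasDerivAt (f := F ∘ γ)
      (fun t ht => (hF _ (mem_univ _)).comp t (hγ t ht))
      ((hf.continuous.comp_continuousOn hγc).mul hγ').intervalIntegrable,
    intervalIntegral.integral_eq_sub_of_hasDerivAt (f := fun t : ℝ => F t)
      (fun t _ => (hF _ (mem_univ _)).comp_ofReal)
      ((hf.continuous.comp continuous_ofReal).intervalIntegrable _ _)]
  simp [ha, hb]

theorem intervalIntegral_pow_mul_one_sub_pow (p q : ℕ) :
    ∫ x in (0:ℝ)..1, (x : ℂ) ^ p * (1 - (x : ℂ)) ^ q =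
      p.factorial * q.factorial / (p + q + 1).factorial := by
  have h := betaIntegral_eq_Gamma_mul_div (p + 1) (q + 1) (by simp; positivity)
    (by simp; positivity)
  rw [show (p + 1 : ℂ) + (q + 1) = ((p + q + 1 : ℕ) : ℂ) + 1 by push_cast; ring] at h
  simp only [Gamma_nat_eq_factorial, betaIntegral, add_sub_cancel_right] at h
  simpa [← cpow_natCast] using h

theorem one_div_pow_mul_pow_eq_intervalIntegral {A B : ℂ}
    (h : ∀ t ∈ Icc (0:ℝ) 1, (t : ℂ) * A + (1 - t) * B ≠ 0) (p q : ℕ) :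
    1 / (A ^ (p + 1) * B ^ (q + 1)) = (p + q + 1).factorial / (p.factorial * q.factorial) *
      ∫ t in (0:ℝ)..1, (t : ℂ) ^ p * (1 - t) ^ q / (t * A + (1 - t) * B) ^ (p + q + 2) := by
  set D : ℝ → ℂ := fun t => t * A + (1 - t) * B with hD
  have hA : A ≠ 0 := by simpa using h 1 (by simp)
  have hB : B ≠ 0 := by simpa using h 0 (by simp)
  rw [← uIcc_of_le zero_le_one] at h
  have hγ : ∀ t ∈ uIcc (0:ℝ) 1, HasDerivAt (fun t : ℝ => t * A / D t) (A * B / D t ^ 2) t := by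
    intro t ht
    have hx : HasDerivAt (fun t : ℝ => (t : ℂ)) 1 t := (hasDerivAt_id t).ofReal_comp
    have hD' : HasDerivAt D (A - B) t :=
      ((hx.mul_const A).add ((hx.const_sub 1).mul_const B)).congr_deriv (by ring)
    refine ((hx.mul_const A).div hD' (h t ht)).congr_deriv ?_
    rw [hD]; ring
  have hγ' : ContinuousOn (fun t : ℝ => A * B / D t ^ 2) (uIcc 0 1) :=
    continuousOn_const.div (by fun_prop) fun t ht => pow_ne_zero 2 (h t ht)
  have hintegrand : ∀ t ∈ uIcc (0:ℝ) 1,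
      (t * A / D t) ^ p * (1 - t * A / D t) ^ q * (A * B / D t ^ 2) =
        A ^ (p + 1) * B ^ (q + 1) * ((t : ℂ) ^ p * (1 - t) ^ q / D t ^ (p + q + 2)) := by
    intro t ht
    have hDt : D t ≠ 0 := h t ht
    rw [show 1 - t * A / D t = (1 - t) * B / D t by
      rw [eq_div_iff hDt, sub_mul, div_mul_cancel₀ _ hDt, hD]; ring]
    rw [div_pow, div_pow, div_mul_div_comm, div_mul_div_comm, ← pow_add, ← pow_add]
    generalize 1 - (t : ℂ) = s
    ring
  have hpath := (show Differentiable ℂ fun z : ℂ => z ^ p * (1 - z) ^ q by fun_prop)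
    |>.intervalIntegral_comp_mul_deriv_eq hγ hγ' (by simp [D]) (by simp [D, hA])
  rw [intervalIntegral_pow_mul_one_sub_pow, intervalIntegral.integral_congr hintegrand,
    intervalIntegral.integral_const_mul] at hpath
  have hJ := eq_div_of_mul_eq (mul_ne_zero (pow_ne_zero _ hA) (pow_ne_zero _ hB))
    ((mul_comm _ _).trans hpath)
  rw [hD] at hJ
  rw [hJ]
  field_simp [Nat.factorial_ne_zero]

theorem circleIntegral_exp_mul_div_sub_pow {c w : ℂ} {R : ℝ} (hw : w ∈ ball c R) (L : ℂ)
    (N : ℕ) :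
    ∮ u in C(c, R), exp (u * L) / (u - w) ^ (N + 1) =
      2 * Real.pi * I * (L ^ N / N.factorial) * exp (w * L) := by
  induction N with
  | zero =>
    simpa [div_eq_inv_mul] using (show Differentiable ℂ fun u => exp (u * L) by fun_prop)
      |>.diffContOnCl.circleIntegral_sub_inv_smul hw
  | succ N ih =>
    have hR : 0 ≤ R := (pos_of_mem_ball hw).le
    have hne : ∀ u ∈ sphere c R, u - w ≠ 0 := fun u hu =>
      sub_ne_zero.2 (sphere_disjoint_ball.ne_of_mem hu hw)
    have hint : ∀ (a : ℂ) (n : ℕ),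
        CircleIntegrable (fun u => a * (exp (u * L) / (u - w) ^ n)) c R := fun a n =>
      (continuousOn_const.mul <| (by fun_prop : Continuous fun u => exp (u * L)).continuousOn.div
        (by fun_prop) fun u hu => pow_ne_zero _ (hne u hu)).circleIntegrable hR
    -- `∮ g' = 0` for `g u = exp (u L) / (u - w) ^ (N + 1)` is the recursion in `N`
    have hderiv : ∀ u ∈ sphere c R, HasDerivWithinAt (fun u => exp (u * L) / (u - w) ^ (N + 1))
        (L * (exp (u * L) / (u - w) ^ (N + 1)) -
          (N + 1 : ℂ) * (exp (u * L) / (u - w) ^ (N + 1 + 1))) (sphere c R) u := by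
      intro u hu
      refine HasDerivAt.hasDerivWithinAt <| ((((hasDerivAt_id' u).mul_const L).cexp).div
        (((hasDerivAt_id' u).sub_const w).fun_pow _) (pow_ne_zero _ (hne u hu))).congr_deriv ?_
      have := hne u hu
      field_simp
      push_cast
      ring
    have h0 := circleIntegral.integral_eq_zero_of_hasDerivWithinAt hR hderiv
    rw [circleIntegral.integral_sub (hint _ _) (hint _ _), circleIntegral.integral_const_mul,
      circleIntegral.integral_const_mul, ih, sub_eq_zero] at h0
    have hN : (N + 1 : ℂ) ≠ 0 := by exact_mod_cast N.succ_ne_zero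
    rw [← mul_right_inj' hN, ← h0, Nat.factorial_succ]
    push_cast
    field_simp
    ring

theorem circleIntegral_intervalIntegral_swap {E : Type*} [NormedAddCommGroup E]
    [NormedSpace ℂ E] {F : ℂ → ℝ → E} {c : ℂ} {R a b : ℝ} (hR : 0 ≤ R)
    (hF : ContinuousOn (Function.uncurry F) (sphere c R ×ˢ uIcc a b)) :
    ∮ z in C(c, R), ∫ t in a..b, F z t = ∫ t in a..b, ∮ z in C(c, R), F z t := by
  simp only [circleIntegral, deriv_circleMap, ← intervalIntegral.integral_smul]
  refine intervalIntegral_intervalIntegral_swap ?_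
  refine ContinuousOn.integrableOn_compact (isCompact_uIcc.prod isCompact_uIcc) ?_
    |>.mono_set (prod_mono uIoc_subset_uIcc uIoc_subset_uIcc)
  have hmaps : MapsTo (fun p : ℝ × ℝ => (circleMap c R p.1, p.2))
      (uIcc 0 (2 * Real.pi) ×ˢ uIcc a b) (sphere c R ×ˢ uIcc a b) := fun p hp =>
    ⟨circleMap_mem_sphere c hR p.1, hp.2⟩
  exact ContinuousOn.smul (by fun_prop) (hF.comp (by fun_prop) hmaps)

theorem Convex.ofReal_mul_add_one_sub_mul_mem {s : Set ℂ} (hs : Convex ℝ s) {z₁ z₂ : ℂ}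
    (h₁ : z₁ ∈ s) (h₂ : z₂ ∈ s) {t : ℝ} (ht : t ∈ Icc (0:ℝ) 1) :
    (t : ℂ) * z₁ + (1 - t) * z₂ ∈ s := by
  simpa [real_smul] using hs h₁ h₂ ht.1 (sub_nonneg.2 ht.2) (add_sub_cancel t 1)

theorem circleIntegral_div_pow_mul_pow_eq_intervalIntegral {f : ℂ → ℂ} {c z₁ z₂ : ℂ} {R : ℝ}
    (hf : ContinuousOn f (sphere c R)) (hz₁ : z₁ ∈ ball c R) (hz₂ : z₂ ∈ ball c R) (p q : ℕ) :
    ∮ u in C(c, R), f u / ((u - z₁) ^ (p + 1) * (u - z₂) ^ (q + 1)) =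
      (p + q + 1).factorial / (p.factorial * q.factorial) *
        ∫ t in (0:ℝ)..1, (t : ℂ) ^ p * (1 - t) ^ q *
          ∮ u in C(c, R), f u / (u - (t * z₁ + (1 - t) * z₂)) ^ (p + q + 2) := by
  have hR : 0 ≤ R := (pos_of_mem_ball hz₁).le
  have hne : ∀ u ∈ sphere c R, ∀ t ∈ Icc (0:ℝ) 1, u - (t * z₁ + (1 - t) * z₂) ≠ 0 :=
    fun u hu t ht => sub_ne_zero.2 (sphere_disjoint_ball.ne_of_mem hu
      ((convex_ball c R).ofReal_mul_add_one_sub_mul_mem hz₁ hz₂ ht))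
  have hfeynman : EqOn (fun u => f u / ((u - z₁) ^ (p + 1) * (u - z₂) ^ (q + 1)))
      (fun u => (p + q + 1).factorial / (p.factorial * q.factorial) *
        ∫ t in (0:ℝ)..1,
          (t : ℂ) ^ p * (1 - t) ^ q * (f u / (u - (t * z₁ + (1 - t) * z₂)) ^ (p + q + 2)))
      (sphere c R) := by
    intro u hu
    have hD : ∀ t : ℝ, (t : ℂ) * (u - z₁) + (1 - t) * (u - z₂) = u - (t * z₁ + (1 - t) * z₂) :=
      fun t => by ring
    simp only
    rw [div_eq_mul_one_div,
      one_div_pow_mul_pow_eq_intervalIntegral (fun t ht => hD t ▸ hne u hu t ht),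
      mul_left_comm, ← intervalIntegral.integral_const_mul]
    congr 1
    refine intervalIntegral.integral_congr fun t _ => ?_
    simp only [hD]
    ring
  rw [circleIntegral.integral_congr hR hfeynman, circleIntegral.integral_const_mul,
    circleIntegral_intervalIntegral_swap hR]
  · simp only [circleIntegral.integral_const_mul]
  · rw [uIcc_of_le zero_le_one]
    exact ContinuousOn.mul (by fun_prop) <| (hf.comp continuousOn_fst fun x hx => hx.1).div
      (by fun_prop) fun x hx => pow_ne_zero _ (hne x.1 hx.1 x.2 hx.2)

theorem setIntegral_simplex_eq_intervalIntegral {E : Type*} [NormedAddCommGroup E]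
    [NormedSpace ℝ E] {g : ℝ × ℝ → E}
    (hg : ContinuousOn g {p | 0 ≤ p.1 ∧ 0 ≤ p.2 ∧ p.1 + p.2 ≤ 1}) :
    ∫ p in {p : ℝ × ℝ | 0 ≤ p.1 ∧ 0 ≤ p.2 ∧ p.1 + p.2 ≤ 1}, g p =
      ∫ a in (0:ℝ)..1, ∫ s in (0:ℝ)..1, (1 - a) • g (a, (1 - a) * s) := by
  set S := {p : ℝ × ℝ | 0 ≤ p.1 ∧ 0 ≤ p.2 ∧ p.1 + p.2 ≤ 1}
  have hSc : IsClosed S := (isClosed_le continuous_const continuous_fst).inter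
    ((isClosed_le continuous_const continuous_snd).inter
      (isClosed_le (continuous_fst.add continuous_snd) continuous_const))
  have hSK : IsCompact S :=
    (isCompact_Icc (a := ((0:ℝ), (0:ℝ))) (b := (1, 1))).of_isClosed_subset hSc fun p hp =>
      ⟨⟨hp.1, hp.2.1⟩, ⟨by linarith [hp.2.1, hp.2.2], by linarith [hp.1, hp.2.2]⟩⟩
  have hSX : S ⊆ Icc 0 1 ×ˢ univ := fun p hp =>
    ⟨⟨hp.1, by linarith [hp.2.1, hp.2.2]⟩, mem_univ _⟩
  have hslice : ∀ a ∈ Icc (0:ℝ) 1,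
      ∫ b, S.indicator g (a, b) = ∫ b in (0:ℝ)..(1 - a), g (a, b) := by
    intro a ha
    have hiff : ∀ b : ℝ, (a, b) ∈ S ↔ b ∈ Icc 0 (1 - a) := fun b =>
      ⟨fun h => ⟨h.2.1, by linarith [h.2.2]⟩, fun h => ⟨ha.1, h.1, by linarith [h.2]⟩⟩
    rw [intervalIntegral.integral_of_le (by linarith [ha.2]), ← integral_Icc_eq_integral_Ioc,
      ← integral_indicator measurableSet_Icc]
    simp only [indicator_apply, hiff]
  calc ∫ p in S, g p = ∫ p in (Icc 0 1 ×ˢ univ) ∩ S, g p := by rw [inter_eq_right.2 hSX]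
    _ = ∫ p in Icc 0 1 ×ˢ univ, S.indicator g p :=
      (setIntegral_indicator hSc.measurableSet).symm
    _ = ∫ a in Icc 0 1, ∫ b, S.indicator g (a, b) := by
      rw [Measure.volume_eq_prod, setIntegral_prod, Measure.restrict_univ]
      exact ((hg.integrableOn_compact hSK).integrable_indicator hSc.measurableSet).integrableOn
    _ = ∫ a in (0:ℝ)..1, ∫ b in (0:ℝ)..(1 - a), g (a, b) := by
      rw [setIntegral_congr_fun measurableSet_Icc hslice,
        intervalIntegral.integral_of_le zero_le_one, integral_Icc_eq_integral_Ioc]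
    _ = ∫ a in (0:ℝ)..1, ∫ s in (0:ℝ)..1, (1 - a) • g (a, (1 - a) * s) := by
      congr 1 with a
      rw [intervalIntegral.integral_smul, intervalIntegral.smul_integral_comp_mul_left
        (fun b => g (a, b)), mul_zero, mul_one]

theorem circleIntegral_exp_mul_div_eq_intervalIntegral {α β : ℂ} {r : ℝ} (hα : ‖α‖ < r)
    (hβ : ‖β‖ < r) (L : ℂ) (m n k : ℕ) :
    ∮ u in C(0, r), exp (u * L) / ((α + u) ^ (m + 1) * (u - β) ^ (n + 1) * u ^ (k + 1)) =
      2 * Real.pi * I * (L ^ (m + n + k + 2) / (k.factorial * m.factorial * n.factorial)) *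
        ∫ s in (0:ℝ)..1, ∫ t in (0:ℝ)..1,
          (s : ℂ) ^ n * (1 - s) ^ k * t ^ m * (1 - t) ^ (n + k + 1) *
            exp ((t * -α + (1 - t) * (s * β)) * L) := by
  have hR : 0 ≤ r := (norm_nonneg α).trans hα.le
  have hα' : -α ∈ ball (0:ℂ) r := by simpa using hα
  have hβ' : β ∈ ball (0:ℂ) r := by simpa using hβ
  have h0 : (0:ℂ) ∈ ball (0:ℂ) r := by simpa using (norm_nonneg α).trans_lt hα
  have hI : uIcc (0:ℝ) 1 = Icc 0 1 := uIcc_of_le zero_le_one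
  have hf : ContinuousOn (fun u => exp (u * L) / (u - -α) ^ (m + 1)) (sphere 0 r) :=
    (by fun_prop : Continuous fun u => exp (u * L)).continuousOn.div (by fun_prop) fun u hu =>
      pow_ne_zero _ (sub_ne_zero.2 (sphere_disjoint_ball.ne_of_mem hu hα'))
  calc ∮ u in C(0, r), exp (u * L) / ((α + u) ^ (m + 1) * (u - β) ^ (n + 1) * u ^ (k + 1))
      = ∮ u in C(0, r),
          exp (u * L) / (u - -α) ^ (m + 1) / ((u - β) ^ (n + 1) * (u - 0) ^ (k + 1)) :=
        circleIntegral.integral_congr hR fun u _ => by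
          simp only [sub_neg_eq_add, sub_zero, add_comm u α, div_div, mul_assoc]
    _ = (n + k + 1).factorial / (n.factorial * k.factorial) *
          ∫ s in (0:ℝ)..1, (s : ℂ) ^ n * (1 - s) ^ k *
            ((m + (n + k + 1) + 1).factorial / (m.factorial * (n + k + 1).factorial) *
              ∫ t in (0:ℝ)..1, (t : ℂ) ^ m * (1 - t) ^ (n + k + 1) *
                (2 * Real.pi * I *
                  (L ^ (m + (n + k + 1) + 1) / (m + (n + k + 1) + 1).factorial) *
                    exp ((t * -α + (1 - t) * (s * β + (1 - s) * 0)) * L))) := by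
      rw [circleIntegral_div_pow_mul_pow_eq_intervalIntegral hf hβ' h0]
      congr 1
      refine intervalIntegral.integral_congr fun s hs => ?_
      have hs' := (convex_ball 0 r).ofReal_mul_add_one_sub_mul_mem hβ' h0 (hI ▸ hs)
      simp only [div_div]
      rw [circleIntegral_div_pow_mul_pow_eq_intervalIntegral (by fun_prop) hα' hs']
      congr 2
      refine intervalIntegral.integral_congr fun t ht => ?_
      rw [circleIntegral_exp_mul_div_sub_pow
        ((convex_ball 0 r).ofReal_mul_add_one_sub_mul_mem hα' hs' (hI ▸ ht))]
    _ = _ := by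
      simp_rw [mul_zero, add_zero, ← intervalIntegral.integral_const_mul]
      refine intervalIntegral.integral_congr fun s _ =>
        intervalIntegral.integral_congr fun t _ => ?_
      rw [show m + (n + k + 1) + 1 = m + n + k + 2 by ring]
      field_simp [Nat.factorial_ne_zero]

theorem circleIntegral_exp_mul_div_eq_setIntegral_simplex {α β : ℂ} {r : ℝ} (hα : ‖α‖ < r)
    (hβ : ‖β‖ < r) (L : ℂ) (m n k : ℕ) :
    ∮ u in C(0, r), exp (u * L) / ((α + u) ^ (m + 1) * (u - β) ^ (n + 1) * u ^ (k + 1)) =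
      2 * Real.pi * I * (L ^ (m + n + k + 2) / (k.factorial * m.factorial * n.factorial)) *
        ∫ p in {p : ℝ × ℝ | 0 ≤ p.1 ∧ 0 ≤ p.2 ∧ p.1 + p.2 ≤ 1},
          (((1 - p.1 - p.2) ^ k * p.1 ^ m * p.2 ^ n : ℝ) : ℂ) *
            exp ((-(p.1 : ℂ) * α + p.2 * β) * L) := by
  rw [circleIntegral_exp_mul_div_eq_intervalIntegral hα hβ,
    setIntegral_simplex_eq_intervalIntegral (Continuous.continuousOn (by fun_prop)),
    intervalIntegral_intervalIntegral_swap]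
  · congr 1
    refine intervalIntegral.integral_congr fun t _ =>
      intervalIntegral.integral_congr fun s _ => ?_
    rw [real_smul, show (1 - t - (1 - t) * s : ℝ) = (1 - t) * (1 - s) by ring, mul_pow, mul_pow]
    push_cast
    ring_nf
  · exact (ContinuousOn.integrableOn_compact (isCompact_uIcc.prod isCompact_uIcc)
      (Continuous.continuousOn (by fun_prop))).mono_set
      (prod_mono uIoc_subset_uIcc uIoc_subset_uIcc)

theorem circleIntegral_two_poles_eq_simplex_integral_general
    (m n k : ℕ) (hm : 1 ≤ m) (hn : 1 ≤ n) (r q : ℝ)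
    (α β : ℂ) (hα : ‖α‖ < r) (hβ : ‖β‖ < r) :
    (1 / (2 * (Real.pi : ℂ) * Complex.I)) *
        (∮ u in C(0, r),
          Complex.exp (u * Real.log q) / ((α + u) ^ m * (u - β) ^ n * u ^ (k + 1)))
      = ((Real.log q ^ (k + m + n) /
            ((Nat.factorial k : ℝ) * (Nat.factorial (m - 1) : ℝ) * (Nat.factorial (n - 1) : ℝ)) : ℝ) : ℂ)
          * ∫ p in {p : ℝ × ℝ | 0 ≤ p.1 ∧ 0 ≤ p.2 ∧ p.1 + p.2 ≤ 1},
              (((1 - p.1 - p.2) ^ k * p.1 ^ (m - 1) * p.2 ^ (n - 1) : ℝ) : ℂ)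
                * Complex.exp ((-(p.1 : ℂ) * α + (p.2 : ℂ) * β) * Real.log q) := by
  obtain ⟨m, rfl⟩ := Nat.exists_eq_add_of_le' hm
  obtain ⟨n, rfl⟩ := Nat.exists_eq_add_of_le' hn
  rw [circleIntegral_exp_mul_div_eq_setIntegral_simplex hα hβ, Nat.add_sub_cancel,
    Nat.add_sub_cancel, show k + (m + 1) + (n + 1) = m + n + k + 2 by ring, ← mul_assoc]
  congr 1
  push_cast
  field_simp

/-- For integers `m, n ≥ 1`, `k ≥ 0`, reals `r, q > 0` and `α, β ∈ ℂ` with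
`|α| < r`, `|β| < r`:
`(1/(2πi)) ∮_{|u|=r} q^u (α+u)^{-m} (u-β)^{-n} u^{-(k+1)} du
  = ((log q)^{k+m+n}/(k!(m-1)!(n-1)!)) ∬_{a,b ≥ 0, a+b ≤ 1} (1-a-b)^k q^{-aα+bβ} a^{m-1} b^{n-1} da db`. -/
theorem circleIntegral_two_poles_eq_simplex_integral
    (m n k : ℕ) (hm : 1 ≤ m) (hn : 1 ≤ n) (r q : ℝ) (hr : 0 < r) (hq : 0 < q)
    (α β : ℂ) (hα : ‖α‖ < r) (hβ : ‖β‖ < r) :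
    (1 / (2 * (Real.pi : ℂ) * Complex.I)) *
        (∮ u in C(0, r),
          Complex.exp (u * Real.log q) / ((α + u) ^ m * (u - β) ^ n * u ^ (k + 1)))
      = ((Real.log q ^ (k + m + n) /
            ((Nat.factorial k : ℝ) * (Nat.factorial (m - 1) : ℝ) * (Nat.factorial (n - 1) : ℝ)) : ℝ) : ℂ)
          * ∫ p in {p : ℝ × ℝ | 0 ≤ p.1 ∧ 0 ≤ p.2 ∧ p.1 + p.2 ≤ 1},
              (((1 - p.1 - p.2) ^ k * p.1 ^ (m - 1) * p.2 ^ (n - 1) : ℝ) : ℂ)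
                * Complex.exp ((-(p.1 : ℂ) * α + (p.2 : ℂ) * β) * Real.log q) :=
  circleIntegral_two_poles_eq_simplex_integral_general m n k hm hn r q α β hα hβ
end

section
/- For every a ∈ ℂ and every real number i > -1, lim_{ℓ → 1⁺} (1/Γ(ℓ-1)) ∫_0^1 e^{-au} u^{ℓ-2} (1-u)^{i+ℓ-ℓ²} du = 1, the limit being taken over real ℓ decreasing to 1 (for real ℓ > 1 sufficiently close to 1 the integral converges absolutely). -/
/-!
Write `s = ℓ - 1`. Since `Γ(s) = Γ(s + 1) / s` and `Γ(s + 1) → 1`, it suffices to show that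
`s ∫₀¹ u^(s-1) φ(u) (1-u)^c du → φ(0)` with `φ(u) = e^(-au)` and `c = i + ℓ - ℓ² → i`.
The substitution `u = t^(1/s)` turns `s u^(s-1) du` into `dt`, giving
`∫₀¹ φ(t^(1/s)) (1-t^(1/s))^c dt`.
As `s → 0⁺`, `t^(1/s) → 0` for every `t < 1`, so the integrand tends to `φ(0)` pointwise; it is
dominated by `C (1-t)^c₀` for a fixed `c₀ ∈ (-1, 0]` below `c`, because `t^(1/s) ≤ t`.
-/

open Filter MeasureTheory Set Topology

theorem intervalIntegrable_rpow_mul_one_sub_rpow {p q : ℝ} (hp : -1 < p) (hq : -1 < q) :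
    IntervalIntegrable (fun u : ℝ => u ^ p * (1 - u) ^ q) volume 0 1 := by
  have h := (Complex.betaIntegral_convergent (u := (p : ℂ) + 1) (v := (q : ℂ) + 1)
    (by simp; linarith) (by simp; linarith)).norm
  rw [intervalIntegrable_iff_integrableOn_Ioo_of_le zero_le_one] at h ⊢
  refine h.congr_fun (fun u ⟨hu0, hu1⟩ => ?_) measurableSet_Ioo
  simp only [add_sub_cancel_right, norm_mul]
  rw [Complex.norm_cpow_eq_rpow_re_of_pos hu0, ← Complex.ofReal_one, ← Complex.ofReal_sub,
    Complex.norm_cpow_eq_rpow_re_of_pos (sub_pos.2 hu1), Complex.ofReal_re, Complex.ofReal_re]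

theorem intervalIntegrable_mul_rpow_mul_one_sub_rpow {φ : ℝ → ℂ} (hφ : Continuous φ)
    {p q : ℝ} (hp : -1 < p) (hq : -1 < q) :
    IntervalIntegrable (fun u : ℝ => φ u * ((u ^ p * (1 - u) ^ q : ℝ) : ℂ)) volume 0 1 := by
  have h := intervalIntegrable_rpow_mul_one_sub_rpow hp hq
  exact IntervalIntegrable.continuousOn_mul ⟨h.1.ofReal, h.2.ofReal⟩ hφ.continuousOn

theorem integral_comp_rpow_inv_unitInterval {E : Type*} [NormedAddCommGroup E]
    [NormedSpace ℝ E] (g : ℝ → E) {s : ℝ} (hs : 0 < s) :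
    ∫ t in (0 : ℝ)..1, g (t ^ s⁻¹) = s • ∫ u in (0 : ℝ)..1, u ^ (s - 1) • g u := by
  have himage : (· ^ s) '' Ioo (0 : ℝ) 1 = Ioo 0 1 := by
    ext t
    constructor
    · rintro ⟨u, ⟨hu0, hu1⟩, rfl⟩
      exact ⟨Real.rpow_pos_of_pos hu0 s, Real.rpow_lt_one hu0.le hu1 hs⟩
    · rintro ⟨ht0, ht1⟩
      exact ⟨t ^ s⁻¹, ⟨Real.rpow_pos_of_pos ht0 _, Real.rpow_lt_one ht0.le ht1 (inv_pos.2 hs)⟩,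
        Real.rpow_inv_rpow ht0.le hs.ne'⟩
  have hsubst := integral_image_eq_integral_abs_deriv_smul
    (measurableSet_Ioo (a := (0 : ℝ)) (b := 1))
    (fun u hu => (Real.hasDerivAt_rpow_const (Or.inl hu.1.ne')).hasDerivWithinAt)
    ((Real.strictMonoOn_rpow_Ici_of_exponent_pos hs).injOn.mono
      (Ioo_subset_Icc_self.trans Icc_subset_Ici_self))
    (fun t => g (t ^ s⁻¹))
  rw [himage] at hsubst
  rw [intervalIntegral.integral_of_le zero_le_one, intervalIntegral.integral_of_le zero_le_one,
    integral_Ioc_eq_integral_Ioo, integral_Ioc_eq_integral_Ioo, hsubst, ← integral_smul]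
  refine setIntegral_congr_fun measurableSet_Ioo fun u hu => ?_
  rw [abs_of_pos (by have := hu.1; positivity), Real.rpow_rpow_inv hu.1.le hs.ne', mul_smul]

theorem mul_integral_mul_rpow_sub_one_mul_one_sub_rpow (φ : ℝ → ℂ) {s : ℝ} (hs : 0 < s)
    (c : ℝ) :
    (s : ℂ) * ∫ u in (0 : ℝ)..1, φ u * ((u ^ (s - 1) * (1 - u) ^ c : ℝ) : ℂ) =
      ∫ t in (0 : ℝ)..1, φ (t ^ s⁻¹) * (((1 - t ^ s⁻¹) ^ c : ℝ) : ℂ) := by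
  rw [integral_comp_rpow_inv_unitInterval (fun u => φ u * (((1 - u) ^ c : ℝ) : ℂ)) hs,
    Complex.real_smul]
  congr 1
  refine intervalIntegral.integral_congr fun u _ => ?_
  simp only [Complex.real_smul, Complex.ofReal_mul]
  ring

theorem intervalIntegrable_one_sub_rpow {c : ℝ} (hc : -1 < c) :
    IntervalIntegrable (fun t : ℝ => (1 - t) ^ c) volume 0 1 := by
  have h := (intervalIntegral.intervalIntegrable_rpow' hc (a := 0) (b := 1)).comp_sub_left 1
  simp only [sub_zero, sub_self] at h
  exact h.symm

theorem one_sub_rpow_inv_rpow_le {s t c c₀ : ℝ} (hs₀ : 0 < s) (hs₁ : s ≤ 1) (ht₀ : 0 < t)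
    (ht₁ : t < 1) (hc : c₀ ≤ c) (hc₀ : c₀ ≤ 0) :
    (1 - t ^ s⁻¹) ^ c ≤ (1 - t) ^ c₀ := by
  have hle : t ^ s⁻¹ ≤ t := by
    simpa using Real.rpow_le_rpow_of_exponent_ge ht₀ ht₁.le ((one_le_inv₀ hs₀).2 hs₁)
  have hpos : 0 < t ^ s⁻¹ := Real.rpow_pos_of_pos ht₀ _
  calc (1 - t ^ s⁻¹) ^ c ≤ (1 - t ^ s⁻¹) ^ c₀ :=
        Real.rpow_le_rpow_of_exponent_ge (by linarith) (by linarith) hc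
    _ ≤ (1 - t) ^ c₀ := Real.rpow_le_rpow_of_nonpos (by linarith) (by linarith) hc₀

theorem tendsto_rpow_inv_of_tendsto_nhdsGT_zero {ι : Type*} {l : Filter ι} {s : ι → ℝ}
    (hs : Tendsto s l (𝓝[>] 0)) {t : ℝ} (ht₀ : 0 ≤ t) (ht₁ : t < 1) :
    Tendsto (fun x => t ^ (s x)⁻¹) l (𝓝 0) :=
  (tendsto_rpow_atTop_of_base_lt_one t (by linarith) ht₁).comp (tendsto_inv_nhdsGT_zero.comp hs)

theorem tendsto_mul_integral_mul_rpow_sub_one_mul_one_sub_rpow {ι : Type*} {l : Filter ι}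
    [l.IsCountablyGenerated] {φ : ℝ → ℂ} (hφ : Continuous φ) {s c : ι → ℝ} {γ : ℝ}
    (hs : Tendsto s l (𝓝[>] 0)) (hc : Tendsto c l (𝓝 γ)) (hγ : -1 < γ) :
    Tendsto (fun x => (s x : ℂ) *
        ∫ u in (0 : ℝ)..1, φ u * ((u ^ (s x - 1) * (1 - u) ^ c x : ℝ) : ℂ)) l (𝓝 (φ 0)) := by
  obtain ⟨c₀, hc₀, hc₀γ⟩ := exists_between (lt_min hγ neg_one_lt_zero)
  obtain ⟨M, hM⟩ := (isCompact_Icc (a := (0 : ℝ)) (b := 1)).exists_bound_of_continuousOn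
    hφ.continuousOn
  set G : ι → ℝ → ℂ := fun x t => φ (t ^ (s x)⁻¹) * (((1 - t ^ (s x)⁻¹) ^ c x : ℝ) : ℂ)
  have hs_pos : ∀ᶠ x in l, 0 < s x := hs self_mem_nhdsWithin
  have hs_lt_one : ∀ᶠ x in l, s x < 1 :=
    (hs.mono_right nhdsWithin_le_nhds).eventually_lt_const zero_lt_one
  have hc_gt : ∀ᶠ x in l, c₀ < c x := hc.eventually_const_lt (hc₀γ.trans_le (min_le_left _ _))
  have hsubst : ∀ᶠ x in l, ∫ t in (0 : ℝ)..1, G x t =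
      (s x : ℂ) * ∫ u in (0 : ℝ)..1, φ u * ((u ^ (s x - 1) * (1 - u) ^ c x : ℝ) : ℂ) := by
    filter_upwards [hs_pos] with x hx
    exact (mul_integral_mul_rpow_sub_one_mul_one_sub_rpow φ hx (c x)).symm
  refine Tendsto.congr' hsubst ?_
  have hlimit : ∫ _ in (0 : ℝ)..1, φ 0 = φ 0 := by simp
  rw [← hlimit]
  -- `t = 1` is discarded: there `1 - t ^ (s x)⁻¹ = 0`, and `0 ^ c x` need not tend to `1`.
  have hIoo : ∀ᵐ t ∂volume, t ∈ uIoc (0 : ℝ) 1 → t ∈ Ioo 0 1 := by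
    filter_upwards [Measure.ae_ne volume 1] with t ht₁ ht
    rw [uIoc_of_le zero_le_one] at ht
    exact ⟨ht.1, lt_of_le_of_ne ht.2 ht₁⟩
  refine intervalIntegral.tendsto_integral_filter_of_dominated_convergence
    (fun t => M * (1 - t) ^ c₀) ?_ ?_ ?_ ?_
  · refine Eventually.of_forall fun x => ?_
    have hφ_meas := hφ.measurable
    exact (by fun_prop : Measurable (G x)).aestronglyMeasurable
  · filter_upwards [hs_pos, hs_lt_one, hc_gt] with x hx₀ hx₁ hcx
    filter_upwards [hIoo] with t ht hmem
    obtain ⟨ht₀, ht₁⟩ := ht hmem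
    have hu : t ^ (s x)⁻¹ ∈ Icc 0 1 :=
      ⟨Real.rpow_nonneg ht₀.le _, Real.rpow_le_one ht₀.le ht₁.le (inv_nonneg.2 hx₀.le)⟩
    rw [norm_mul, Complex.norm_real, Real.norm_of_nonneg (Real.rpow_nonneg (by linarith [hu.2]) _)]
    exact mul_le_mul (hM _ hu)
      (one_sub_rpow_inv_rpow_le hx₀ hx₁.le ht₀ ht₁ hcx.le (hc₀γ.le.trans (min_le_right _ _)))
      (Real.rpow_nonneg (by linarith [hu.2]) _) ((norm_nonneg _).trans (hM 0 ⟨le_rfl, zero_le_one⟩))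
  · exact (intervalIntegrable_one_sub_rpow hc₀).const_mul M
  · filter_upwards [hIoo] with t ht hmem
    obtain ⟨ht₀, ht₁⟩ := ht hmem
    have hu := tendsto_rpow_inv_of_tendsto_nhdsGT_zero hs ht₀.le ht₁
    have hpow := ((tendsto_const_nhds (x := (1 : ℝ))).sub hu).rpow hc (Or.inl (by norm_num))
    simpa using ((hφ.tendsto 0).comp hu).mul hpow.ofReal

theorem one_div_Gamma_sub_one {ℓ : ℝ} (hℓ : ℓ ≠ 1) :
    1 / Real.Gamma (ℓ - 1) = (Real.Gamma ℓ)⁻¹ * (ℓ - 1) := by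
  have hℓ' : ℓ - 1 ≠ 0 := sub_ne_zero.2 hℓ
  have hGamma : Real.Gamma ℓ = (ℓ - 1) * Real.Gamma (ℓ - 1) := by
    rw [← Real.Gamma_add_one hℓ', sub_add_cancel]
  rw [hGamma, mul_inv, mul_comm _ (Real.Gamma (ℓ - 1))⁻¹, mul_assoc, inv_mul_cancel₀ hℓ',
    mul_one, one_div]

theorem tendsto_inv_Gamma_nhdsGT_one :
    Tendsto (fun ℓ : ℝ => (Real.Gamma ℓ)⁻¹) (𝓝[>] 1) (𝓝 1) := by
  have hcont : ContinuousAt Real.Gamma 1 :=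
    (Real.differentiableAt_Gamma fun m h => by linarith [m.cast_nonneg (α := ℝ)]).continuousAt
  simpa [Real.Gamma_one] using (hcont.tendsto.inv₀ (by simp)).mono_left nhdsWithin_le_nhds

/-- For every `a ∈ ℂ` and every real `i > -1`,
`lim_{ℓ → 1⁺} (1/Γ(ℓ-1)) ∫₀¹ e^{-au} u^{ℓ-2} (1-u)^{i+ℓ-ℓ²} du = 1`,
the limit being over real `ℓ` decreasing to `1`; moreover for real `ℓ > 1` close enough
to `1` the integral converges absolutely. -/
theorem tendsto_gamma_normalized_integral_one
    (a : ℂ) (i : ℝ) (hi : -1 < i) :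
    (∀ᶠ ℓ : ℝ in nhdsWithin 1 (Set.Ioi 1),
        IntervalIntegrable
          (fun u : ℝ =>
            Complex.exp (-a * u) * ((u ^ (ℓ - 2) * (1 - u) ^ (i + ℓ - ℓ ^ 2) : ℝ) : ℂ))
          volume 0 1) ∧
    Filter.Tendsto
      (fun ℓ : ℝ =>
        ((1 / Real.Gamma (ℓ - 1) : ℝ) : ℂ)
          * ∫ u in (0:ℝ)..1,
              Complex.exp (-a * u) * ((u ^ (ℓ - 2) * (1 - u) ^ (i + ℓ - ℓ ^ 2) : ℝ) : ℂ))
      (nhdsWithin 1 (Set.Ioi 1)) (nhds 1) := by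
  have hexp : Continuous fun u : ℝ => Complex.exp (-a * u) := by fun_prop
  have hsub : Tendsto (fun ℓ : ℝ => ℓ - 1) (𝓝[>] 1) (𝓝[>] 0) :=
    tendsto_nhdsWithin_iff.2 ⟨((continuous_sub_right 1).tendsto' 1 0 (sub_self 1)).mono_left
      nhdsWithin_le_nhds, eventually_nhdsWithin_of_forall fun _ hℓ => sub_pos.2 (mem_Ioi.1 hℓ)⟩
  have hc : Tendsto (fun ℓ : ℝ => i + ℓ - ℓ ^ 2) (𝓝[>] 1) (𝓝 i) :=
    ((by fun_prop : Continuous fun ℓ : ℝ => i + ℓ - ℓ ^ 2).tendsto' 1 i (by ring)).mono_left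
      nhdsWithin_le_nhds
  have hℓ_sub : ∀ ℓ : ℝ, ℓ - 1 - 1 = ℓ - 2 := fun ℓ => by ring
  constructor
  · filter_upwards [self_mem_nhdsWithin, hc.eventually_const_lt hi] with ℓ hℓ hcℓ
    exact intervalIntegrable_mul_rpow_mul_one_sub_rpow hexp (by linarith [mem_Ioi.1 hℓ]) hcℓ
  · have hI := tendsto_mul_integral_mul_rpow_sub_one_mul_one_sub_rpow hexp hsub hc hi
    simp only [hℓ_sub, Complex.ofReal_zero, mul_zero, Complex.exp_zero] at hI
    have hΓ := (tendsto_inv_Gamma_nhdsGT_one).ofReal.mul hI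
    rw [Complex.ofReal_one, one_mul] at hΓ
    refine hΓ.congr' ?_
    filter_upwards [self_mem_nhdsWithin] with ℓ hℓ
    rw [one_div_Gamma_sub_one (mem_Ioi.1 hℓ).ne', Complex.ofReal_mul, mul_assoc]
end
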